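/- arXiv:2005.07767 — 9 statements merged into one kernel-verified Lean document; each statement's English description precedes it below -/
import Mathlib

section
/- Let G be a quadratic equivariant map on R^N with G(x)_0 = (1/2) x^T Q x for a real symmetric N×N matrix Q (indices mod N). Then G is energy-preserving if and only if Q_{(i-k)(j-k)} + Q_{(i-j)(k-j)} + Q_{(j-i)(k-i)} = 0 for all i, j, k in Z/NZ. -/
private lemma collapse3 {N : ℕ} [NeZero N] (a b d : ZMod N) (s t u : ℝ) (h : ZMod N → ℝ) :
    (∑ m : ZMod N,
        ((if m = a then s else 0) + (if m = b then t else 0) + (if m = d then u else 0)) * h m)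
      = s * h a + t * h b + u * h d := by
  simp [add_mul, Finset.sum_add_distrib, ite_mul]

private lemma nest3 {N : ℕ} [NeZero N] (R : ZMod N → ZMod N → ZMod N → ℝ) (x : ZMod N → ℝ) :
    (∑ i : ZMod N, x i * ∑ j : ZMod N, x j * ∑ k : ZMod N, x k * R i j k)
    = ∑ i : ZMod N, ∑ j : ZMod N, ∑ k : ZMod N, R i j k * x i * x j * x k := by
  simp only [Finset.mul_sum]
  refine Finset.sum_congr rfl fun i _ => ?_
  refine Finset.sum_congr rfl fun j _ => ?_
  exact Finset.sum_congr rfl fun k _ => by ring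

private lemma cubic_zero {N : ℕ} [NeZero N] (R : ZMod N → ZMod N → ZMod N → ℝ)
    (hs1 : ∀ i j k, R i j k = R j i k) (hs2 : ∀ i j k, R i j k = R i k j)
    (h0 : ∀ x : ZMod N → ℝ,
      (∑ i : ZMod N, ∑ j : ZMod N, ∑ k : ZMod N, R i j k * x i * x j * x k) = 0)
    (a b d : ZMod N) : R a b d = 0 := by
  have h0' : ∀ x : ZMod N → ℝ,
      (∑ i : ZMod N, x i * ∑ j : ZMod N, x j * ∑ k : ZMod N, x k * R i j k) = 0 :=
    fun x => (nest3 R x).trans (h0 x)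
  have ev : ∀ s t u : ℝ,
      s * (s * (s * R a a a + t * R a a b + u * R a a d)
         + t * (s * R a b a + t * R a b b + u * R a b d)
         + u * (s * R a d a + t * R a d b + u * R a d d))
    + t * (s * (s * R b a a + t * R b a b + u * R b a d)
         + t * (s * R b b a + t * R b b b + u * R b b d)
         + u * (s * R b d a + t * R b d b + u * R b d d))
    + u * (s * (s * R d a a + t * R d a b + u * R d a d)
         + t * (s * R d b a + t * R d b b + u * R d b d)
         + u * (s * R d d a + t * R d d b + u * R d d d)) = 0 := by
    intro s t u
    have h := h0' (fun m =>
      (if m = a then s else 0) + (if m = b then t else 0) + (if m = d then u else 0))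
    simpa only [collapse3] using h
  have e1 := ev 1 0 0
  have e2 := ev 0 1 0
  have e3 := ev 0 0 1
  have e4 := ev 1 1 0
  have e5 := ev 1 (-1) 0
  have e6 := ev 1 0 1
  have e7 := ev 1 0 (-1)
  have e8 := ev 0 1 1
  have e9 := ev 0 1 (-1)
  have e10 := ev 1 1 1
  have s1 := hs1 a b d
  have s2 := hs2 a b d
  have s3 := hs1 a d b
  have s4 := hs2 b a d
  have s5 := hs1 b d a
  linarith [e1, e2, e3, e4, e5, e6, e7, e8, e9, e10, s1, s2, s3, s4, s5]

private lemma shiftA {N : ℕ} [NeZero N] (Q : ZMod N → ZMod N → ℝ) (x : ZMod N → ℝ) :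
    (∑ i : ZMod N, ∑ j : ZMod N, ∑ k : ZMod N, Q (i - k) (j - k) * x i * x j * x k)
    = ∑ m : ZMod N, ∑ p : ZMod N, ∑ q : ZMod N, Q p q * x (p + m) * x (q + m) * x m := by
  have h1 : (∑ i : ZMod N, ∑ j : ZMod N, ∑ k : ZMod N, Q (i - k) (j - k) * x i * x j * x k)
      = ∑ k : ZMod N, ∑ i : ZMod N, ∑ j : ZMod N, Q (i - k) (j - k) * x i * x j * x k :=
    (Finset.sum_congr rfl fun i _ => Finset.sum_comm).trans Finset.sum_comm
  rw [h1]
  refine Finset.sum_congr rfl fun k _ => ?_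
  refine Fintype.sum_equiv (Equiv.subRight k) _ _ fun i => ?_
  refine Fintype.sum_equiv (Equiv.subRight k) _ _ fun j => ?_
  simp only [Equiv.subRight_apply, sub_add_cancel]

private lemma shiftB {N : ℕ} [NeZero N] (Q : ZMod N → ZMod N → ℝ) (x : ZMod N → ℝ) :
    (∑ i : ZMod N, ∑ j : ZMod N, ∑ k : ZMod N, Q (i - j) (k - j) * x i * x j * x k)
    = ∑ m : ZMod N, ∑ p : ZMod N, ∑ q : ZMod N, Q p q * x (p + m) * x (q + m) * x m := by
  rw [Finset.sum_comm]
  refine Finset.sum_congr rfl fun j _ => ?_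
  refine Fintype.sum_equiv (Equiv.subRight j) _ _ fun i => ?_
  refine Fintype.sum_equiv (Equiv.subRight j) _ _ fun k => ?_
  simp only [Equiv.subRight_apply, sub_add_cancel]
  ring

private lemma shiftC {N : ℕ} [NeZero N] (Q : ZMod N → ZMod N → ℝ) (x : ZMod N → ℝ) :
    (∑ i : ZMod N, ∑ j : ZMod N, ∑ k : ZMod N, Q (j - i) (k - i) * x i * x j * x k)
    = ∑ m : ZMod N, ∑ p : ZMod N, ∑ q : ZMod N, Q p q * x (p + m) * x (q + m) * x m := by
  refine Finset.sum_congr rfl fun i _ => ?_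
  refine Fintype.sum_equiv (Equiv.subRight i) _ _ fun j => ?_
  refine Fintype.sum_equiv (Equiv.subRight i) _ _ fun k => ?_
  simp only [Equiv.subRight_apply, sub_add_cancel]
  ring

/-- Let `G` be the quadratic shift-equivariant map on `R^N` determined by a real symmetric
matrix `Q` (indices mod `N`) via `G(x)_m = (1/2) (ρ^m x)ᵀ Q (ρ^m x)`.  Then `G` is
energy-preserving iff `Q_{(i-k)(j-k)} + Q_{(i-j)(k-j)} + Q_{(j-i)(k-i)} = 0` for all
`i, j, k` in `Z/NZ`. -/
theorem energy_preserving_iff_Q_condition (N : ℕ) [NeZero N]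
    (Q : ZMod N → ZMod N → ℝ)
    (hQ : ∀ r s, Q r s = Q s r)
    (G : (ZMod N → ℝ) → ZMod N → ℝ)
    (hG : ∀ x m, G x m =
      (1 / 2 : ℝ) * ∑ i : ZMod N, ∑ j : ZMod N, Q i j * x (i + m) * x (j + m)) :
    (∀ x : ZMod N → ℝ, ∑ m : ZMod N, x m * G x m = 0) ↔
      (∀ i j k : ZMod N,
        Q (i - k) (j - k) + Q (i - j) (k - j) + Q (j - i) (k - i) = 0) := by
  have key : ∀ x : ZMod N → ℝ,
      (∑ i : ZMod N, ∑ j : ZMod N, ∑ k : ZMod N,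
        (Q (i - k) (j - k) + Q (i - j) (k - j) + Q (j - i) (k - i)) * x i * x j * x k)
      = 6 * ∑ m : ZMod N, x m * G x m := by
    intro x
    have hsplit : (∑ i : ZMod N, ∑ j : ZMod N, ∑ k : ZMod N,
        (Q (i - k) (j - k) + Q (i - j) (k - j) + Q (j - i) (k - i)) * x i * x j * x k)
      = (∑ i : ZMod N, ∑ j : ZMod N, ∑ k : ZMod N, Q (i - k) (j - k) * x i * x j * x k)
      + (∑ i : ZMod N, ∑ j : ZMod N, ∑ k : ZMod N, Q (i - j) (k - j) * x i * x j * x k)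
      + (∑ i : ZMod N, ∑ j : ZMod N, ∑ k : ZMod N, Q (j - i) (k - i) * x i * x j * x k) := by
      simp only [add_mul, Finset.sum_add_distrib]
    rw [hsplit, shiftA Q x, shiftB Q x, shiftC Q x]
    have hm : ∀ m : ZMod N,
        (∑ p : ZMod N, ∑ q : ZMod N, Q p q * x (p + m) * x (q + m) * x m)
        = (∑ p : ZMod N, ∑ q : ZMod N, Q p q * x (p + m) * x (q + m)) * x m := by
      intro m
      rw [Finset.sum_mul]
      exact Finset.sum_congr rfl fun p _ => by rw [Finset.sum_mul]
    have hG' : (∑ m : ZMod N, x m * G x m)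
        = ∑ m : ZMod N,
            x m * ((1 / 2 : ℝ) * ∑ p : ZMod N, ∑ q : ZMod N, Q p q * x (p + m) * x (q + m)) :=
      Finset.sum_congr rfl fun m _ => by rw [hG x m]
    rw [hG', Finset.mul_sum]
    calc (∑ m : ZMod N, ∑ p : ZMod N, ∑ q : ZMod N, Q p q * x (p + m) * x (q + m) * x m)
          + (∑ m : ZMod N, ∑ p : ZMod N, ∑ q : ZMod N, Q p q * x (p + m) * x (q + m) * x m)
          + (∑ m : ZMod N, ∑ p : ZMod N, ∑ q : ZMod N, Q p q * x (p + m) * x (q + m) * x m)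
        = ∑ m : ZMod N,
            (6 : ℝ) * (x m * ((1 / 2 : ℝ) * ∑ p : ZMod N, ∑ q : ZMod N,
              Q p q * x (p + m) * x (q + m))) := by
          rw [← Finset.sum_add_distrib, ← Finset.sum_add_distrib]
          refine Finset.sum_congr rfl fun m _ => ?_
          rw [hm m]
          ring
      _ = _ := rfl
  constructor
  · intro h i j k
    have hs1 : ∀ i j k : ZMod N,
        Q (i - k) (j - k) + Q (i - j) (k - j) + Q (j - i) (k - i)
        = Q (j - k) (i - k) + Q (j - i) (k - i) + Q (i - j) (k - j) := by
      intro i j k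
      rw [hQ (i - k) (j - k)]
      ring
    have hs2 : ∀ i j k : ZMod N,
        Q (i - k) (j - k) + Q (i - j) (k - j) + Q (j - i) (k - i)
        = Q (i - j) (k - j) + Q (i - k) (j - k) + Q (k - i) (j - i) := by
      intro i j k
      rw [hQ (j - i) (k - i)]
      ring
    exact cubic_zero
      (fun i j k => Q (i - k) (j - k) + Q (i - j) (k - j) + Q (j - i) (k - i))
      hs1 hs2 (fun x => by rw [key x, h x, mul_zero]) i j k
  · intro h x
    have hz : (∑ i : ZMod N, ∑ j : ZMod N, ∑ k : ZMod N,
        (Q (i - k) (j - k) + Q (i - j) (k - j) + Q (j - i) (k - i)) * x i * x j * x k) = 0 := by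
      have hterm : ∀ i j k : ZMod N,
          (Q (i - k) (j - k) + Q (i - j) (k - j) + Q (j - i) (k - i)) * x i * x j * x k = 0 :=
        fun i j k => by rw [h i j k]; ring
      simp only [hterm, Finset.sum_const_zero]
    have h6 := key x
    rw [hz] at h6
    linarith
end

section
/- For N ≥ 4, the space of quadratic, energy-preserving, shift-equivariant, 1-localized maps G : R^N → R^N is two-dimensional, spanned by G₁ and G̃₁, where G₁(x)_0 = x₁² − x₀x_{−1} and G̃₁(x)_0 = x_{−1}² − x₀x₁ (extended equivariantly to all components). -/
/-!
By shift-equivariance `G` is determined by its `0`-th component, which by quadraticity and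
1-localization is a quadratic form in `x₋₁, x₀, x₁` with six coefficients. Energy preservation
is a cubic identity in `x`; testing it on vectors supported on `{-1, 0, 1}` (for `N ≥ 4` the
neighbours `±2` lie outside the support) kills the coefficients of `x₀²` and `x₋₁x₁` and forces
those of `x₋₁x₀` and `x₀x₁` to be minus those of `x₁²` and `x₋₁²`. What is left is the span of
`G₁` and `G̃₁`, whose energies telescope.
-/

/-- `IsGood N G` says `G : R^N → R^N` is quadratic (i.e. `G = (1/2) B(x,x)` for a symmetric
bilinear `B`), energy-preserving, equivariant under the cyclic left shift, and 1-localized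
(each component `G(x)_i` depends only on `x_{i-1}, x_i, x_{i+1}`). -/
def IsGood (N : ℕ) [NeZero N] (G : (ZMod N → ℝ) → ZMod N → ℝ) : Prop :=
  (∃ B : (ZMod N → ℝ) → (ZMod N → ℝ) → ZMod N → ℝ,
      (∀ x y, B x y = B y x) ∧
      (∀ x y z, B (x + y) z = B x z + B y z) ∧
      (∀ (a : ℝ) (x y), B (a • x) y = a • B x y) ∧
      (∀ x, G x = fun i => (1 / 2 : ℝ) * B x x i)) ∧
  (∀ x : ZMod N → ℝ, ∑ i : ZMod N, x i * G x i = 0) ∧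
  (∀ (x : ZMod N → ℝ) (i : ZMod N), G (fun j => x (j + 1)) i = G x (i + 1)) ∧
  (∀ (x y : ZMod N → ℝ) (i : ZMod N),
      x (i - 1) = y (i - 1) → x i = y i → x (i + 1) = y (i + 1) → G x i = G y i)

open Finset

theorem ZMod.natCast_ne_zero_of_lt {N k : ℕ} (hk : 0 < k) (hkN : k < N) : (k : ZMod N) ≠ 0 := by
  rw [Ne, ZMod.natCast_eq_zero_iff]
  exact Nat.not_dvd_of_pos_of_lt hk hkN

-- the normal form in which `norm_num` reduces index comparisons to `(k : ZMod N) = 0`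
theorem Pi.single_apply_eq_ite_sub_eq_zero {ι M : Type*} [AddGroup ι] [DecidableEq ι] [Zero M]
    (k j : ι) (a : M) : (Pi.single k a : ι → M) j = if j - k = 0 then a else 0 := by
  simp [Pi.single_apply, sub_eq_zero]

theorem sum_smul_single_mul {ι R : Type*} [Fintype ι] [DecidableEq ι] [CommSemiring R]
    (r p q : R) (a b c : ι) (f : ι → R) :
    ∑ i, (r • Pi.single a 1 + p • Pi.single b 1 + q • Pi.single c 1 : ι → R) i * f i
      = r * f a + p * f b + q * f c := by
  simp [add_mul, sum_add_distrib, Pi.single_apply]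

theorem Fintype.sum_sub_comp_add_eq_zero {G M : Type*} [AddGroup G] [Fintype G]
    [AddCommGroup M] (f : G → M) (a : G) : ∑ i, (f (i + a) - f i) = 0 := by
  rw [sum_sub_distrib, sub_eq_zero]
  exact Fintype.sum_equiv (Equiv.addRight a) _ _ fun _ => rfl

theorem bilin_add_add_self {R M : Type*} [CommSemiring R] [AddCommMonoid M] [Module R M]
    (b : M → M → R) (hsymm : ∀ x y, b x y = b y x)
    (hadd : ∀ x y z, b (x + y) z = b x z + b y z)
    (hsmul : ∀ (a : R) x y, b (a • x) y = a * b x y) (r p q : R) (u v w : M) :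
    b (r • u + p • v + q • w) (r • u + p • v + q • w)
      = r ^ 2 * b u u + p ^ 2 * b v v + q ^ 2 * b w w
        + 2 * (r * p) * b u v + 2 * (p * q) * b v w + 2 * (r * q) * b u w := by
  have hadd' : ∀ x y z, b x (y + z) = b x y + b x z := fun x y z => by
    rw [hsymm, hadd, hsymm y, hsymm z]
  have hsmul' : ∀ (a : R) x y, b x (a • y) = a * b x y := fun a x y => by
    rw [hsymm, hsmul, hsymm y]
  simp only [hadd, hadd', hsmul, hsmul']
  rw [hsymm v u, hsymm w u, hsymm w v]
  ring

theorem apply_add_natCast_eq_of_shift {α β : Type*} {N : ℕ} {G : (ZMod N → α) → ZMod N → β}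
    (hG : ∀ x i, G (fun j => x (j + 1)) i = G x (i + 1)) (n : ℕ) (x : ZMod N → α)
    (i : ZMod N) : G (fun j => x (j + n)) i = G x (i + n) := by
  induction n generalizing i with
  | zero => simp
  | succ n ih =>
    have hassoc (j : ZMod N) : j + ↑(n + 1) = j + 1 + n := by push_cast; ring
    simp only [hassoc]
    exact (hG (fun j => x (j + n)) i).trans (ih (i + 1))

theorem apply_eq_apply_zero_of_shift {α β : Type*} {N : ℕ} [NeZero N]
    {G : (ZMod N → α) → ZMod N → β} (hG : ∀ x i, G (fun j => x (j + 1)) i = G x (i + 1))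
    (x : ZMod N → α) (i : ZMod N) : G x i = G (fun j => x (j + i)) 0 := by
  simpa [ZMod.natCast_zmod_val] using (apply_add_natCast_eq_of_shift hG i.val x 0).symm

def localQuadMap {N : ℕ} (α β γ δ ε ζ : ℝ) (x : ZMod N → ℝ) (i : ZMod N) : ℝ :=
  α * x (i - 1) ^ 2 + β * x i ^ 2 + γ * x (i + 1) ^ 2
    + δ * (x (i - 1) * x i) + ε * (x i * x (i + 1)) + ζ * (x (i - 1) * x (i + 1))

section localQuadMap

variable {N : ℕ} {α β γ δ ε ζ : ℝ}

theorem localQuadMap_comp_add (x : ZMod N → ℝ) (i k : ZMod N) :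
    localQuadMap α β γ δ ε ζ (fun j => x (j + k)) i = localQuadMap α β γ δ ε ζ x (i + k) := by
  simp only [localQuadMap]
  rw [show i - 1 + k = i + k - 1 by ring, show i + 1 + k = i + k + 1 by ring]

theorem isGood_localQuadMap [NeZero N] (α γ : ℝ) :
    IsGood N (localQuadMap α 0 γ (-γ) (-α) 0) := by
  refine ⟨⟨fun x y i => 2 * α * (x (i - 1) * y (i - 1)) + 2 * γ * (x (i + 1) * y (i + 1))
      - γ * (x (i - 1) * y i + y (i - 1) * x i) - α * (x i * y (i + 1) + y i * x (i + 1)),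
      ?_, ?_, ?_, ?_⟩, fun x => ?_, fun x i => localQuadMap_comp_add x i 1, ?_⟩
  · intro x y; funext i; ring
  · intro x y z; funext i; simp only [Pi.add_apply]; ring
  · intro a x y; funext i; simp only [Pi.smul_apply, smul_eq_mul]; ring
  · intro x; funext i; simp only [localQuadMap]; ring
  · calc ∑ i, x i * localQuadMap α 0 γ (-γ) (-α) 0 x i
        = γ * ∑ i, (x (i + 1 - 1) * x (i + 1) ^ 2 - x (i - 1) * x i ^ 2)
          - α * ∑ i, (x (i + 1) * x (i + 1 - 1) ^ 2 - x i * x (i - 1) ^ 2) := by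
          rw [mul_sum, mul_sum, ← sum_sub_distrib]
          refine sum_congr rfl fun i _ => ?_
          simp only [localQuadMap, add_sub_cancel_right]
          ring
      _ = 0 := by
          rw [Fintype.sum_sub_comp_add_eq_zero (fun i => x (i - 1) * x i ^ 2),
            Fintype.sum_sub_comp_add_eq_zero (fun i => x i * x (i - 1) ^ 2)]
          ring
  · intro x y i hl hc hr
    simp only [localQuadMap, hl, hc, hr]

theorem localQuadMap_coeffs_of_energy [NeZero N] (hN : 4 ≤ N)
    (h : ∀ x : ZMod N → ℝ, ∑ i, x i * localQuadMap α β γ δ ε ζ x i = 0) :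
    β = 0 ∧ δ = -γ ∧ ε = -α ∧ ζ = 0 := by
  have h1 : (1 : ZMod N) ≠ 0 := by exact_mod_cast ZMod.natCast_ne_zero_of_lt one_pos (by omega)
  have h2 : (2 : ZMod N) ≠ 0 := by exact_mod_cast ZMod.natCast_ne_zero_of_lt two_pos (by omega)
  have h3 : (3 : ZMod N) ≠ 0 := by
    exact_mod_cast ZMod.natCast_ne_zero_of_lt (k := 3) (by norm_num) (by omega)
  have energy (r p q : ℝ) :
      r * (β * r ^ 2 + γ * p ^ 2 + ε * (r * p))
        + p * (α * r ^ 2 + β * p ^ 2 + γ * q ^ 2 + δ * (r * p) + ε * (p * q) + ζ * (r * q))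
        + q * (α * p ^ 2 + β * q ^ 2 + δ * (p * q)) = 0 := by
    have := h (r • Pi.single (-1) 1 + p • Pi.single 0 1 + q • Pi.single 1 1)
    rw [sum_smul_single_mul] at this
    norm_num [localQuadMap, Pi.single_apply_eq_ite_sub_eq_zero, h1, h2, h3] at this
    linear_combination this
  have e010 := energy 0 1 0
  have e011 := energy 0 1 1
  have e01m := energy 0 1 (-1)
  have e111 := energy 1 1 1
  exact ⟨by linarith, by linarith, by linarith, by linarith⟩

end localQuadMap

theorem eq_zero_of_forall_mul_add_mul_eq_zero {N : ℕ} (hN : 3 ≤ N) {a b : ℝ}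
    (h : ∀ (x : ZMod N → ℝ) (i : ZMod N),
      a * (x (i + 1) ^ 2 - x i * x (i - 1)) + b * (x (i - 1) ^ 2 - x i * x (i + 1)) = 0) :
    a = 0 ∧ b = 0 := by
  have h1 : (1 : ZMod N) ≠ 0 := by exact_mod_cast ZMod.natCast_ne_zero_of_lt one_pos (by omega)
  have h2 : (2 : ZMod N) ≠ 0 := by exact_mod_cast ZMod.natCast_ne_zero_of_lt two_pos (by omega)
  have ha := h (Pi.single 1 1) 0
  have hb := h (Pi.single (-1) 1) 0
  norm_num [Pi.single_apply_eq_ite_sub_eq_zero, h1, h2] at ha hb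
  exact ⟨ha, hb⟩

section classification

variable {N : ℕ} [NeZero N] {G : (ZMod N → ℝ) → ZMod N → ℝ}

theorem IsGood.exists_apply_zero_eq_localQuadMap (hN : 3 ≤ N) (hG : IsGood N G) :
    ∃ α β γ δ ε ζ : ℝ, ∀ x, G x 0 = localQuadMap α β γ δ ε ζ x 0 := by
  obtain ⟨⟨B, hsymm, hadd, hsmul, hGB⟩, -, -, hloc⟩ := hG
  have h1 : (1 : ZMod N) ≠ 0 := by exact_mod_cast ZMod.natCast_ne_zero_of_lt one_pos (by omega)
  have h2 : (2 : ZMod N) ≠ 0 := by exact_mod_cast ZMod.natCast_ne_zero_of_lt two_pos (by omega)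
  have hB := bilin_add_add_self (fun x y => B x y 0) (fun x y => congrFun (hsymm x y) 0)
    (fun x y z => congrFun (hadd x y z) 0) (fun a x y => congrFun (hsmul a x y) 0)
  set e : ZMod N → ZMod N → ℝ := fun k => Pi.single k 1
  refine ⟨B (e (-1)) (e (-1)) 0 / 2, B (e 0) (e 0) 0 / 2, B (e 1) (e 1) 0 / 2,
    B (e (-1)) (e 0) 0, B (e 0) (e 1) 0, B (e (-1)) (e 1) 0, fun x => ?_⟩
  have hwindow : G x 0 = G (x (-1) • e (-1) + x 0 • e 0 + x 1 • e 1) 0 := by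
    apply hloc <;> norm_num [e, Pi.single_apply_eq_ite_sub_eq_zero, h1, h2]
  rw [hwindow, hGB]
  dsimp only
  rw [hB]
  simp only [localQuadMap, zero_sub, zero_add]
  ring

theorem IsGood.exists_eq_localQuadMap (hN : 3 ≤ N) (hG : IsGood N G) :
    ∃ α β γ δ ε ζ : ℝ, G = localQuadMap α β γ δ ε ζ := by
  obtain ⟨α, β, γ, δ, ε, ζ, hG0⟩ := hG.exists_apply_zero_eq_localQuadMap hN
  refine ⟨α, β, γ, δ, ε, ζ, funext fun x => funext fun i => ?_⟩
  rw [apply_eq_apply_zero_of_shift hG.2.2.1, hG0, localQuadMap_comp_add, zero_add]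

end classification

/-- For `N ≥ 4` the space of quadratic, energy-preserving, shift-equivariant, 1-localized
maps on `R^N` is two-dimensional, spanned by `G₁(x)_i = x_{i+1}² − x_i x_{i−1}` and
`G̃₁(x)_i = x_{i−1}² − x_i x_{i+1}`. -/
theorem one_localized_classification (N : ℕ) (hN : 4 ≤ N) [NeZero N] :
    IsGood N (fun x i => x (i + 1) ^ 2 - x i * x (i - 1)) ∧
    IsGood N (fun x i => x (i - 1) ^ 2 - x i * x (i + 1)) ∧
    (∀ G : (ZMod N → ℝ) → ZMod N → ℝ, IsGood N G →
      ∃ a b : ℝ, ∀ (x : ZMod N → ℝ) (i : ZMod N),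
        G x i = a * (x (i + 1) ^ 2 - x i * x (i - 1))
              + b * (x (i - 1) ^ 2 - x i * x (i + 1))) ∧
    (∀ a b : ℝ,
      (∀ (x : ZMod N → ℝ) (i : ZMod N),
        a * (x (i + 1) ^ 2 - x i * x (i - 1))
          + b * (x (i - 1) ^ 2 - x i * x (i + 1)) = 0) → a = 0 ∧ b = 0) := by
  refine ⟨?_, ?_, fun G hG => ?_, fun a b => eq_zero_of_forall_mul_add_mul_eq_zero (by omega)⟩
  · convert isGood_localQuadMap (N := N) 0 1 using 1
    funext x i
    simp only [localQuadMap]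
    ring
  · convert isGood_localQuadMap (N := N) 1 0 using 1
    funext x i
    simp only [localQuadMap]
    ring
  · obtain ⟨α, β, γ, δ, ε, ζ, rfl⟩ := hG.exists_eq_localQuadMap (by omega)
    obtain ⟨rfl, rfl, rfl, rfl⟩ := localQuadMap_coeffs_of_energy hN hG.2.1
    exact ⟨γ, α, fun x i => by simp only [localQuadMap]; ring⟩
end

section
/- Let G be a quadratic, energy-preserving, shift-equivariant map on R^N with linearization A about the constant vector e (i.e. A = B(e, ·) where G = (1/2)B(·,·)), and let p_A be the Laurent polynomial associated with the circulant matrix A. Then p_A(1) = 0, i.e. the entries of each row of A sum to zero. -/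
/-! Equivariance makes `G e` a constant vector, and energy preservation at `e` says that its
entries sum to zero, so `G e = ½ B(e,e) = 0`. Since `B(e,·)` is additive and `e = ∑ⱼ δⱼ`,
the first row sum of `A` is `∑ⱼ B(e,δⱼ)₀ = B(e,e)₀ = 0`. -/

open Finset

namespace ZMod

variable {N : ℕ}

theorem apply_eq_apply_zero_of_apply_add_one {α : Type*} {v : ZMod N → α}
    (hv : ∀ i, v (i + 1) = v i) (i : ZMod N) : v i = v 0 := by
  obtain ⟨n, rfl⟩ := ZMod.intCast_surjective i
  induction n using Int.induction_on with
  | zero => simp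
  | succ n ih => push_cast at ih ⊢; rw [hv, ih]
  | pred n ih => rw [← ih, ← hv]; congr 1; push_cast; ring

theorem eq_zero_of_apply_add_one_of_sum_eq_zero [NeZero N] {K : Type*} [Field K] [CharZero K]
    {v : ZMod N → K} (hv : ∀ i, v (i + 1) = v i) (hsum : ∑ i, v i = 0) : v = 0 := by
  have hconst : ∑ i, v i = N * v 0 := by
    rw [sum_congr rfl fun i _ => apply_eq_apply_zero_of_apply_add_one hv i, sum_const, card_univ,
      ZMod.card, nsmul_eq_mul]
  have hv0 : v 0 = 0 := by
    rw [hconst] at hsum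
    exact (mul_eq_zero.mp hsum).resolve_left (Nat.cast_ne_zero.mpr (NeZero.ne N))
  funext i
  rw [apply_eq_apply_zero_of_apply_add_one hv i, hv0, Pi.zero_apply]

theorem map_const_one_eq_zero_of_equivariant_of_energy [NeZero N] {K : Type*} [Field K]
    [CharZero K] (G : (ZMod N → K) → (ZMod N → K))
    (hequiv : ∀ x, G (fun i => x (i + 1)) = fun i => G x (i + 1))
    (henergy : ∀ x, ∑ i, x i * G x i = 0) : G (fun _ => 1) = 0 :=
  eq_zero_of_apply_add_one_of_sum_eq_zero (fun i => (congrFun (hequiv fun _ => 1) i).symm)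
    (by simpa only [one_mul] using henergy fun _ => 1)

end ZMod

theorem laurent_polynomial_vanishes_at_one_general (N : ℕ) [NeZero N]
    (B : (ZMod N → ℝ) → (ZMod N → ℝ) → (ZMod N → ℝ))
    (hsymm : ∀ x y, B x y = B y x)
    (hadd : ∀ x y z, B (x + y) z = B x z + B y z)
    (G : (ZMod N → ℝ) → (ZMod N → ℝ))
    (hG : ∀ x, G x = (1 / 2 : ℝ) • B x x)
    (hequiv : ∀ x, G (fun i => x (i + 1)) = fun i => G x (i + 1))
    (henergy : ∀ x, ∑ i : ZMod N, x i * G x i = 0) :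
    ∑ j : ZMod N, B (fun _ => 1) (Pi.single j 1) 0 = 0 := by
  set e : ZMod N → ℝ := fun _ => 1
  let A : (ZMod N → ℝ) →+ (ZMod N → ℝ) :=
    AddMonoidHom.mk' (B e) fun y z => by rw [hsymm, hadd, hsymm y, hsymm z]
  have hBee : B e e = 0 := by
    have hGe := ZMod.map_const_one_eq_zero_of_equivariant_of_energy G hequiv henergy
    rw [hG, smul_eq_zero] at hGe
    exact hGe.resolve_left (by norm_num)
  calc ∑ j, B e (Pi.single j 1) 0
      = A (∑ j, Pi.single j (e j)) 0 := by rw [map_sum, Finset.sum_apply]; rfl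
    _ = B e e 0 := by rw [Finset.univ_sum_single]; rfl
    _ = 0 := by rw [hBee, Pi.zero_apply]

/-- Let `G = (1/2) B(x,x)` be quadratic, shift-equivariant and energy-preserving on `R^N`,
and let `A = B(e,·)` be its linearization about `e = (1,…,1)`.  Then the entries of the
first row of the circulant matrix `A` sum to zero, i.e. `p_A(1) = 0`. -/
theorem laurent_polynomial_vanishes_at_one (N : ℕ) [NeZero N]
    (B : (ZMod N → ℝ) → (ZMod N → ℝ) → (ZMod N → ℝ))
    (hsymm : ∀ x y, B x y = B y x)
    (hadd : ∀ x y z, B (x + y) z = B x z + B y z)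
    (hsmul : ∀ (a : ℝ) (x y), B (a • x) y = a • B x y)
    (G : (ZMod N → ℝ) → (ZMod N → ℝ))
    (hG : ∀ x, G x = (1 / 2 : ℝ) • B x x)
    (hequiv : ∀ x, G (fun i => x (i + 1)) = fun i => G x (i + 1))
    (henergy : ∀ x, ∑ i : ZMod N, x i * G x i = 0) :
    ∑ j : ZMod N, B (fun _ => 1) (Pi.single j 1) 0 = 0 :=
  laurent_polynomial_vanishes_at_one_general N B hsymm hadd G hG hequiv henergy
end

section
/- Let B be a positive definite diagonal N×N real matrix, G : R^N → R^N energy-preserving (x^T G(x) = 0), and F ∈ R^N. Then every solution x of 0 = G(x) − Bx + F satisfies ‖B^{1/2} x‖ ≤ ‖B^{−1/2} F‖. -/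
/-- A priori bound for stationary solutions: if `B` is a positive diagonal matrix
(diagonal entries `b i > 0`), `G` is energy-preserving, and `0 = G(x) - Bx + F`, then
`‖B^{1/2} x‖ ≤ ‖B^{-1/2} F‖`. -/
theorem stationary_apriori_bound (N : ℕ) [NeZero N]
    (b : ZMod N → ℝ) (hb : ∀ i, 0 < b i)
    (G : (ZMod N → ℝ) → ZMod N → ℝ)
    (hGe : ∀ x : ZMod N → ℝ, ∑ i : ZMod N, x i * G x i = 0)
    (F x : ZMod N → ℝ)
    (hx : ∀ i : ZMod N, G x i - b i * x i + F i = 0) :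
    Real.sqrt (∑ i : ZMod N, b i * x i ^ 2)
      ≤ Real.sqrt (∑ i : ZMod N, F i ^ 2 / b i) := by
  set S := ∑ i : ZMod N, b i * x i ^ 2 with hS
  set T := ∑ i : ZMod N, F i ^ 2 / b i with hT
  have hS0 : 0 ≤ S := Finset.sum_nonneg fun i _ =>
    mul_nonneg (hb i).le (sq_nonneg _)
  have hT0 : 0 ≤ T := Finset.sum_nonneg fun i _ =>
    div_nonneg (sq_nonneg _) (hb i).le
  -- multiply the equation by x and sum: S = ∑ x F
  have key : S = ∑ i : ZMod N, x i * F i := by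
    have h : ∑ i : ZMod N, x i * (G x i - b i * x i + F i) = 0 := by
      simp [fun i => hx i]
    have hexp : ∑ i : ZMod N, x i * (G x i - b i * x i + F i)
        = (∑ i : ZMod N, x i * G x i) - S + ∑ i : ZMod N, x i * F i := by
      rw [hS, ← Finset.sum_sub_distrib, ← Finset.sum_add_distrib]
      congr 1; ext i; ring
    rw [hexp, hGe x] at h
    linarith
  -- Cauchy–Schwarz
  have hf2 : ∀ i : ZMod N, (Real.sqrt (b i) * x i) ^ 2 = b i * x i ^ 2 := fun i => by
    rw [mul_pow, Real.sq_sqrt (hb i).le]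
  have hg2 : ∀ i : ZMod N, (F i / Real.sqrt (b i)) ^ 2 = F i ^ 2 / b i := fun i => by
    rw [div_pow, Real.sq_sqrt (hb i).le]
  have cs : S ≤ Real.sqrt S * Real.sqrt T := by
    calc S = ∑ i : ZMod N, (Real.sqrt (b i) * x i) * (F i / Real.sqrt (b i)) := by
            rw [key]; congr 1; ext i
            field_simp [Real.sqrt_ne_zero'.2 (hb i)]
      _ ≤ Real.sqrt (∑ i : ZMod N, (Real.sqrt (b i) * x i) ^ 2)
            * Real.sqrt (∑ i : ZMod N, (F i / Real.sqrt (b i)) ^ 2) :=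
          Real.sum_mul_le_sqrt_mul_sqrt _ _ _
      _ = Real.sqrt S * Real.sqrt T := by simp only [hf2, hg2, hS, hT]
  rcases eq_or_lt_of_le (Real.sqrt_nonneg S) with h0 | h0
  · rw [← h0]; exact Real.sqrt_nonneg T
  · have : Real.sqrt S * Real.sqrt S ≤ Real.sqrt S * Real.sqrt T := by
      rwa [Real.mul_self_sqrt hS0]
    exact le_of_mul_le_mul_left this h0
end

section
/- Let C be a positive diagonal matrix, B any N×N matrix, G energy-preserving and locally Lipschitz, and F : R → R^N continuous. Then for any x₀, the solution of ẋ = C G(x) − Bx + F(t), x(0) = x₀, exists globally on R (i.e. cannot blow up in finite time). -/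
/-!
Energy method. For the weighted energy `E(x) = weightedInner c x x = ∑ i, x i ^ 2 / c i`
(the paper's `xᵀ C⁻¹ x`), the term `C G(x)` contributes nothing to `dE/dt`, so on a time interval
`[-T, T]` one has `|dE/dt| ≤ K E + ε`, and Grönwall bounds `E`, hence the solution, a priori.
To construct solutions, the state is first pushed into a ball by the radial retraction; the
truncated field is globally Lipschitz and bounded, so Picard–Lindelöf solves it on `[-T, T]`.
The retraction is a positive multiple of the identity, so the truncated field still satisfies
the energy estimate with the same constants; choosing the radius beyond the a priori bound, the
truncation is never active. Uniqueness glues the solutions on `[-T, T]` into a global one.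
-/

open Set Metric Filter
open scoped NNReal Topology

section RadialRetraction

variable {E : Type*} [NormedAddCommGroup E] [NormedSpace ℝ E] {R : ℝ}

noncomputable def radialRetraction (R : ℝ) (x : E) : E := (R / max R ‖x‖) • x

lemma radialRetraction_of_norm_le (hR : 0 < R) {x : E} (hx : ‖x‖ ≤ R) :
    radialRetraction R x = x := by
  simp [radialRetraction, max_eq_left hx, hR.ne']

lemma radialRetraction_eq_smul (hR : 0 < R) (x : E) :
    ∃ a : ℝ, 0 < a ∧ a ≤ 1 ∧ radialRetraction R x = a • x :=
  ⟨R / max R ‖x‖, by positivity, div_le_one_of_le₀ (le_max_left _ _) (by positivity), rfl⟩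

lemma norm_radialRetraction_le (hR : 0 < R) (x : E) : ‖radialRetraction R x‖ ≤ R := by
  have hm : 0 < max R ‖x‖ := lt_max_of_lt_left hR
  rw [radialRetraction, norm_smul, Real.norm_of_nonneg (by positivity), div_mul_eq_mul_div,
    div_le_iff₀ hm]
  exact mul_le_mul_of_nonneg_left (le_max_right _ _) hR.le

lemma norm_radialRetraction_le_norm (hR : 0 < R) (x : E) : ‖radialRetraction R x‖ ≤ ‖x‖ := by
  obtain ⟨a, ha0, ha1, hx⟩ := radialRetraction_eq_smul hR x
  rw [hx, norm_smul, Real.norm_of_nonneg ha0.le]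
  exact mul_le_of_le_one_left (norm_nonneg x) ha1

lemma lipschitzWith_radialRetraction (hR : 0 < R) :
    LipschitzWith 2 (radialRetraction (E := E) R) := by
  refine LipschitzWith.of_dist_le_mul fun x y => ?_
  set mx := max R ‖x‖
  set my := max R ‖y‖
  have hmx : 0 < mx := lt_max_of_lt_left hR
  have hmy : 0 < my := lt_max_of_lt_left hR
  have hdiff : |my - mx| ≤ ‖x - y‖ := by
    have h := abs_max_sub_max_le_abs ‖x‖ ‖y‖ R
    rw [max_comm ‖x‖, max_comm ‖y‖] at h
    rw [abs_sub_comm]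
    exact h.trans (abs_norm_sub_norm_le x y)
  have hsplit : radialRetraction R x - radialRetraction R y =
      (R / mx) • (x - y) + ((my - mx) / mx * (R / my)) • y := by
    simp only [radialRetraction]
    match_scalars <;> field_simp <;> ring
  have hRx : R / mx ≤ 1 := div_le_one_of_le₀ (le_max_left _ _) hmx.le
  have hy : ‖y‖ / my ≤ 1 := div_le_one_of_le₀ (le_max_right _ _) hmy.le
  rw [dist_eq_norm, hsplit, dist_eq_norm]
  calc ‖(R / mx) • (x - y) + ((my - mx) / mx * (R / my)) • y‖
      ≤ R / mx * ‖x - y‖ + |my - mx| * (R / mx) * (‖y‖ / my) := by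
        refine (norm_add_le _ _).trans_eq ?_
        rw [norm_smul, norm_smul, Real.norm_of_nonneg (by positivity), Real.norm_eq_abs,
          abs_mul, abs_div, abs_of_pos hmx, abs_of_pos (div_pos hR hmy)]
        ring
    _ ≤ 1 * ‖x - y‖ + ‖x - y‖ * 1 * 1 := by gcongr
    _ = 2 * ‖x - y‖ := by ring

end RadialRetraction

section WeightedInner

variable {ι : Type*} [Fintype ι] {c : ι → ℝ}

noncomputable def weightedInner (c x y : ι → ℝ) : ℝ := ∑ i, x i * y i / c i

lemma weightedInner_self_nonneg (hc : ∀ i, 0 < c i) (x : ι → ℝ) : 0 ≤ weightedInner c x x :=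
  Finset.sum_nonneg fun i _ => div_nonneg (mul_self_nonneg _) (hc i).le

lemma weightedInner_mul_add (hc : ∀ i, c i ≠ 0) (x g u : ι → ℝ) :
    weightedInner c x (c * g + u) = ∑ i, x i * g i + weightedInner c x u := by
  rw [weightedInner, weightedInner, ← Finset.sum_add_distrib]
  refine Finset.sum_congr rfl fun i _ => ?_
  have := hc i
  simp only [Pi.add_apply, Pi.mul_apply]
  field_simp

lemma abs_weightedInner_le (hc : ∀ i, 0 < c i) (x y : ι → ℝ) :
    |weightedInner c x y| ≤ (∑ i, (c i)⁻¹) * ‖x‖ * ‖y‖ := by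
  rw [Finset.sum_mul, Finset.sum_mul]
  refine (Finset.abs_sum_le_sum_abs _ _).trans (Finset.sum_le_sum fun i _ => ?_)
  rw [abs_div, abs_mul, abs_of_pos (hc i), div_eq_inv_mul, mul_assoc]
  gcongr
  · exact inv_nonneg.2 (hc i).le
  · exact norm_le_pi_norm x i
  · exact norm_le_pi_norm y i

lemma sq_norm_le_weightedInner_self (hc : ∀ i, 0 < c i) (x : ι → ℝ) :
    ‖x‖ ^ 2 ≤ (∑ i, c i) * weightedInner c x x := by
  have hsum : 0 ≤ (∑ i, c i) * weightedInner c x x :=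
    mul_nonneg (Finset.sum_nonneg fun i _ => (hc i).le) (weightedInner_self_nonneg hc x)
  rw [← Real.sqrt_le_sqrt_iff hsum, Real.sqrt_sq (norm_nonneg x)]
  refine pi_norm_le_iff_of_nonneg (Real.sqrt_nonneg _) |>.2 fun i => ?_
  rw [Real.norm_eq_abs, ← Real.sqrt_sq_eq_abs]
  refine Real.sqrt_le_sqrt ?_
  calc x i ^ 2 = c i * (x i * x i / c i) := by field_simp [(hc i).ne']
    _ ≤ (∑ j, c j) * weightedInner c x x :=
      mul_le_mul (Finset.single_le_sum (fun j _ => (hc j).le) (Finset.mem_univ i))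
        (Finset.single_le_sum (f := fun j => x j * x j / c j)
          (fun j _ => div_nonneg (mul_self_nonneg _) (hc j).le) (Finset.mem_univ i))
        (div_nonneg (mul_self_nonneg _) (hc i).le) (Finset.sum_nonneg fun j _ => (hc j).le)

lemma HasDerivWithinAt.weightedInner_self {y : ℝ → ι → ℝ} {y' : ι → ℝ} {s : Set ℝ} {t : ℝ}
    (hy : HasDerivWithinAt y y' s t) :
    HasDerivWithinAt (fun t => weightedInner c (y t) (y t)) (2 * weightedInner c (y t) y') s t := by
  simp only [weightedInner, Finset.mul_sum]
  refine HasDerivWithinAt.fun_sum fun i _ => ?_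
  have hi := hasDerivWithinAt_pi.1 hy i
  exact ((hi.fun_mul hi).div_const (c i)).congr_deriv (by ring)

lemma abs_two_mul_weightedInner_le (hc : ∀ i, 0 < c i) {b f : ℝ} (hb : 0 ≤ b) {x g u : ι → ℝ}
    (hg : ∑ i, x i * g i = 0) (hu : ‖u‖ ≤ b * ‖x‖ + f) :
    |2 * weightedInner c x (c * g + u)| ≤
      (∑ i, (c i)⁻¹) * (2 * b + 1) * (∑ i, c i) * weightedInner c x x + (∑ i, (c i)⁻¹) * f ^ 2 := by
  set κ := ∑ i, (c i)⁻¹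
  have hκ : 0 ≤ κ := Finset.sum_nonneg fun i _ => inv_nonneg.2 (hc i).le
  rw [weightedInner_mul_add fun i => (hc i).ne', hg, zero_add, abs_mul, abs_two]
  calc 2 * |weightedInner c x u| ≤ 2 * (κ * ‖x‖ * (b * ‖x‖ + f)) := by
        gcongr
        exact (abs_weightedInner_le hc x u).trans (by gcongr)
    _ ≤ κ * ((2 * b + 1) * ‖x‖ ^ 2 + f ^ 2) := by
        nlinarith [mul_nonneg hκ (sq_nonneg (‖x‖ - f))]
    _ ≤ κ * ((2 * b + 1) * ((∑ i, c i) * weightedInner c x x) + f ^ 2) := by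
        gcongr
        exact sq_norm_le_weightedInner_self hc x
    _ = _ := by ring

end WeightedInner

section Gronwall

variable {E : Type*} [NormedAddCommGroup E] [NormedSpace ℝ E] {f f' : ℝ → E} {δ K ε T : ℝ}

lemma norm_le_gronwallBound_of_hasDerivWithinAt_Icc_zero (hK : 0 ≤ K) (hε : 0 ≤ ε)
    (hf : ∀ t ∈ Icc 0 T, HasDerivWithinAt f (f' t) (Icc 0 T) t) (hδ : ‖f 0‖ ≤ δ)
    (bound : ∀ t ∈ Icc 0 T, ‖f' t‖ ≤ K * ‖f t‖ + ε) :
    ∀ t ∈ Icc 0 T, ‖f t‖ ≤ gronwallBound δ K ε T := by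
  have hright : ∀ t ∈ Ico 0 T, HasDerivWithinAt f (f' t) (Ici t) t := fun t ht =>
    (hf t (Ico_subset_Icc_self ht)).mono_of_mem_nhdsWithin
      (mem_of_superset (Icc_mem_nhdsGE ht.2) (Icc_subset_Icc_left ht.1))
  intro t ht
  calc ‖f t‖ ≤ gronwallBound δ K ε (t - 0) :=
        norm_le_gronwallBound_of_norm_deriv_right_le (fun t ht => (hf t ht).continuousWithinAt)
          hright hδ (fun t ht => bound t (Ico_subset_Icc_self ht)) t ht
    _ ≤ gronwallBound δ K ε T :=
        gronwallBound_mono ((norm_nonneg _).trans hδ) hε hK (by linarith [ht.2])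

lemma norm_le_gronwallBound_of_hasDerivWithinAt_Icc (hK : 0 ≤ K) (hε : 0 ≤ ε)
    (hf : ∀ t ∈ Icc (-T) T, HasDerivWithinAt f (f' t) (Icc (-T) T) t) (hδ : ‖f 0‖ ≤ δ)
    (bound : ∀ t ∈ Icc (-T) T, ‖f' t‖ ≤ K * ‖f t‖ + ε) :
    ∀ t ∈ Icc (-T) T, ‖f t‖ ≤ gronwallBound δ K ε T := by
  have hpos : ∀ t ∈ Icc 0 T, t ∈ Icc (-T) T := fun t ht => ⟨by linarith [ht.1, ht.2], ht.2⟩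
  have hneg : MapsTo (fun t : ℝ => -t) (Icc 0 T) (Icc (-T) T) := fun t ht => by
    simp only [mem_Icc] at ht ⊢
    constructor <;> linarith
  have forward := norm_le_gronwallBound_of_hasDerivWithinAt_Icc_zero hK hε
    (fun t ht => (hf t (hpos t ht)).mono (Icc_subset_Icc (by linarith [ht.1, ht.2]) le_rfl)) hδ
    (fun t ht => bound t (hpos t ht))
  have backward := norm_le_gronwallBound_of_hasDerivWithinAt_Icc_zero (f := fun t => f (-t))
    (f' := fun t => -f' (-t)) hK hε
    (fun t ht => by
      simpa [Function.comp_def] using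
        (hf (-t) (hneg ht)).scomp t (hasDerivAt_neg t).hasDerivWithinAt hneg)
    (by simpa using hδ) (fun t ht => by simpa using bound (-t) (hneg ht))
  intro t ht
  rcases le_total 0 t with h | h
  · exact forward t ⟨h, ht.2⟩
  · simpa using backward (-t) ⟨by linarith, by linarith [ht.1]⟩

end Gronwall

lemma LocallyLipschitz.exists_lipschitzOnWith_add_const {E τ : Type*} [NormedAddCommGroup E]
    [ProperSpace E] {A : E → E} (hA : LocallyLipschitz A) (F : τ → E) (R : ℝ) :
    ∃ K, ∀ t, LipschitzOnWith K (fun x => A x + F t) (closedBall 0 R) := by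
  obtain ⟨K, hK⟩ :=
    hA.locallyLipschitzOn.exists_lipschitzOnWith_of_compact (isCompact_closedBall 0 R)
  exact ⟨K, fun t x hx y hy => by simpa using hK hx hy⟩

section IntegralCurves

variable {E : Type*} [NormedAddCommGroup E] [NormedSpace ℝ E]

theorem exists_isIntegralCurveOn_Icc_of_lipschitzWith [CompleteSpace E] {w : ℝ → E → E}
    {K : ℝ≥0} {L T : ℝ} (hT : 0 ≤ T) (hlip : ∀ t ∈ Icc (-T) T, LipschitzWith K (w t))
    (hcont : ∀ x, ContinuousOn (w · x) (Icc (-T) T))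
    (hbound : ∀ t ∈ Icc (-T) T, ∀ x, ‖w t x‖ ≤ L) (x₀ : E) :
    ∃ y : ℝ → E, y 0 = x₀ ∧ IsIntegralCurveOn y w (Icc (-T) T) := by
  have h0 : (0 : ℝ) ∈ Icc (-T) T := ⟨by linarith, hT⟩
  have hL : 0 ≤ L := (norm_nonneg _).trans (hbound 0 h0 x₀)
  -- a solution with speed at most `L` cannot leave the ball of radius `L * T`
  have hPL : IsPicardLindelof w ⟨0, h0⟩ x₀ (L * T).toNNReal 0 L.toNNReal K :=
    { lipschitzOnWith := fun t ht => (hlip t ht).lipschitzOnWith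
      continuousOn := fun x _ => hcont x
      norm_le := fun t ht x _ => (hbound t ht x).trans (Real.le_coe_toNNReal L)
      mul_max_le := by
        simp [Real.coe_toNNReal _ hL, Real.coe_toNNReal _ (mul_nonneg hL hT)] }
  exact hPL.exists_eq_forall_mem_Icc_hasDerivWithinAt₀


theorem exists_isIntegralCurveOn_Icc_radialRetraction [ProperSpace E] {A : E → E}
    (hA : LocallyLipschitz A) {F : ℝ → E} (hF : Continuous F) {R T : ℝ} (hR : 0 < R)
    (hT : 0 ≤ T) (x₀ : E) :
    ∃ y : ℝ → E, y 0 = x₀ ∧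
      IsIntegralCurveOn y (fun t x => A (radialRetraction R x) + F t) (Icc (-T) T) := by
  obtain ⟨K, hK⟩ := hA.exists_lipschitzOnWith_add_const F R
  obtain ⟨MA, hMA⟩ := (isCompact_closedBall (0 : E) R).exists_bound_of_continuousOn
    hA.continuous.continuousOn
  obtain ⟨MF, hMF⟩ := (isCompact_Icc (a := -T) (b := T)).exists_bound_of_continuousOn
    hF.continuousOn
  have hball : ∀ x, radialRetraction R x ∈ closedBall (0 : E) R := fun x =>
    mem_closedBall_zero_iff.2 (norm_radialRetraction_le hR x)
  refine exists_isIntegralCurveOn_Icc_of_lipschitzWith hT (K := K * 2) (L := MA + MF)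
    (fun t _ => lipschitzOnWith_univ.1 <| (hK t).comp
      (lipschitzWith_radialRetraction hR).lipschitzOnWith fun x _ => hball x)
    (fun x => (continuous_const.add hF).continuousOn)
    (fun t ht x => (norm_add_le _ _).trans (add_le_add (hMA _ (hball x)) (hMF t ht))) x₀

lemma eqOn_Ioo_of_isIntegralCurveOn_Icc {v : ℝ → E → E}
    (hv : ∀ R, ∃ K, ∀ t, LipschitzOnWith K (v t) (closedBall 0 R)) {y z : ℝ → E} {T : ℝ}
    (hT : 0 < T) (hy : IsIntegralCurveOn y v (Icc (-T) T))
    (hz : IsIntegralCurveOn z v (Icc (-T) T)) (h0 : y 0 = z 0) :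
    EqOn y z (Ioo (-T) T) := by
  obtain ⟨Cy, hCy⟩ := isCompact_Icc.exists_bound_of_continuousOn hy.continuousOn
  obtain ⟨Cz, hCz⟩ := isCompact_Icc.exists_bound_of_continuousOn hz.continuousOn
  obtain ⟨K, hK⟩ := hv (max Cy Cz)
  have hderiv {γ : ℝ → E} (hγ : IsIntegralCurveOn γ v (Icc (-T) T)) (t : ℝ)
      (ht : t ∈ Ioo (-T) T) : HasDerivAt γ (v t (γ t)) t :=
    (hγ.isIntegralCurveAt (Icc_mem_nhds ht.1 ht.2)).hasDerivAt
  refine ODE_solution_unique_of_mem_Ioo (fun t _ => hK t) ⟨by linarith, hT⟩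
    (fun t ht => ⟨hderiv hy t ht, ?_⟩) (fun t ht => ⟨hderiv hz t ht, ?_⟩) h0
  · exact mem_closedBall_zero_iff.2 ((hCy t (Ioo_subset_Icc_self ht)).trans (le_max_left _ _))
  · exact mem_closedBall_zero_iff.2 ((hCz t (Ioo_subset_Icc_self ht)).trans (le_max_right _ _))

theorem exists_isIntegralCurve_of_forall_isIntegralCurveOn_Icc {v : ℝ → E → E} {x₀ : E}
    (hv : ∀ R, ∃ K, ∀ t, LipschitzOnWith K (v t) (closedBall 0 R))
    (hsol : ∀ T, 0 ≤ T → ∃ y : ℝ → E, y 0 = x₀ ∧ IsIntegralCurveOn y v (Icc (-T) T)) :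
    ∃ x : ℝ → E, x 0 = x₀ ∧ IsIntegralCurve x v := by
  choose y hy0 hy using fun n : ℕ => hsol (n + 1) (by positivity)
  have hmem (s : ℝ) : s ∈ Ioo (-(⌊|s|⌋₊ + 1 : ℝ)) (⌊|s|⌋₊ + 1) :=
    abs_lt.1 (Nat.lt_floor_add_one |s|)
  have hagree {k m : ℕ} (hkm : k ≤ m) : EqOn (y k) (y m) (Ioo (-(k + 1 : ℝ)) (k + 1)) := by
    have hsub : Icc (-(k + 1 : ℝ)) (k + 1) ⊆ Icc (-(m + 1 : ℝ)) (m + 1) := by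
      have : (k : ℝ) ≤ m := by exact_mod_cast hkm
      exact Icc_subset_Icc (by linarith) (by linarith)
    exact eqOn_Ioo_of_isIntegralCurveOn_Icc hv (by positivity) (hy k) ((hy m).mono hsub)
      ((hy0 k).trans (hy0 m).symm)
  refine ⟨fun t => y ⌊|t|⌋₊ t, by simpa using hy0 0, fun t => ?_⟩
  set m := ⌊|t|⌋₊
  have hloc : (fun s => y ⌊|s|⌋₊ s) =ᶠ[𝓝 t] y m := by
    filter_upwards [Ioo_mem_nhds (hmem t).1 (hmem t).2] with s hs
    refine hagree ?_ (hmem s)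
    exact Nat.lt_add_one_iff.1 ((Nat.floor_lt (abs_nonneg s)).2 (by exact_mod_cast abs_lt.2 hs))
  have hym := ((hy m).isIntegralCurveAt (Icc_mem_nhds (hmem t).1 (hmem t).2)).hasDerivAt
  rw [← hloc.eq_of_nhds] at hym
  exact hym.congr_of_eventuallyEq hloc

end IntegralCurves

section EnergyPreserving

variable {ι : Type*} [Fintype ι] {c : ι → ℝ} {G : (ι → ℝ) → ι → ℝ}

lemma sum_mul_apply_smul_eq_zero (hGe : ∀ x, ∑ i, x i * G x i = 0) {a : ℝ} (ha : a ≠ 0)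
    (x : ι → ℝ) :
    ∑ i, x i * G (a • x) i = 0 := by
  have h := hGe (a • x)
  simp only [Pi.smul_apply, smul_eq_mul, mul_assoc, ← Finset.mul_sum] at h
  exact (mul_eq_zero.1 h).resolve_left ha

lemma LocallyLipschitz.mul_sub_continuousLinearMap (hG : LocallyLipschitz G) (c : ι → ℝ)
    (B : (ι → ℝ) →L[ℝ] ι → ℝ) : LocallyLipschitz fun x => c * G x - B x :=
  ((ContinuousLinearMap.mul ℝ (ι → ℝ) c).lipschitz.locallyLipschitz.comp hG).sub
    B.lipschitz.locallyLipschitz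

lemma abs_two_mul_weightedInner_radialRetraction_le (hc : ∀ i, 0 < c i)
    (hGe : ∀ x, ∑ i, x i * G x i = 0) (B : (ι → ℝ) →L[ℝ] ι → ℝ)
    {R f : ℝ} (hR : 0 < R) (x w : ι → ℝ) (hw : ‖w‖ ≤ f) :
    |2 * weightedInner c x (c * G (radialRetraction R x) - B (radialRetraction R x) + w)| ≤
      (∑ i, (c i)⁻¹) * (2 * ‖B‖ + 1) * (∑ i, c i) * weightedInner c x x +
        (∑ i, (c i)⁻¹) * f ^ 2 := by
  obtain ⟨a, ha0, -, hx⟩ := radialRetraction_eq_smul hR x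
  rw [sub_add_eq_add_sub, add_sub_assoc]
  refine abs_two_mul_weightedInner_le hc (norm_nonneg B) ?_ ?_
  · rw [hx]
    exact sum_mul_apply_smul_eq_zero hGe ha0.ne' x
  · calc ‖w - B (radialRetraction R x)‖ ≤ ‖w‖ + ‖B‖ * ‖radialRetraction R x‖ :=
          (norm_sub_le _ _).trans (by gcongr; exact B.le_opNorm _)
      _ ≤ ‖B‖ * ‖x‖ + f := by
          linarith [mul_le_mul_of_nonneg_left (norm_radialRetraction_le_norm hR x) (norm_nonneg B)]

theorem exists_isIntegralCurveOn_Icc_of_energyPreserving (hc : ∀ i, 0 < c i)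
    (hG : LocallyLipschitz G) (hGe : ∀ x, ∑ i, x i * G x i = 0) (B : (ι → ℝ) →L[ℝ] ι → ℝ)
    {F : ℝ → ι → ℝ} (hF : Continuous F) {T : ℝ} (hT : 0 ≤ T) (x₀ : ι → ℝ) :
    ∃ y : ℝ → ι → ℝ, y 0 = x₀ ∧
      IsIntegralCurveOn y (fun t x => c * G x - B x + F t) (Icc (-T) T) := by
  obtain ⟨f, hf⟩ := (isCompact_Icc (a := -T) (b := T)).exists_bound_of_continuousOn
    hF.continuousOn
  set κ := ∑ i, (c i)⁻¹
  set σ := ∑ i, c i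
  have hκ : 0 ≤ κ := Finset.sum_nonneg fun i _ => inv_nonneg.2 (hc i).le
  have hσ : 0 ≤ σ := Finset.sum_nonneg fun i _ => (hc i).le
  set energyBound := gronwallBound (weightedInner c x₀ x₀) (κ * (2 * ‖B‖ + 1) * σ) (κ * f ^ 2) T
  set ρ := √(σ * energyBound)
  obtain ⟨y, hy0, hy⟩ := exists_isIntegralCurveOn_Icc_radialRetraction
    (hG.mul_sub_continuousLinearMap c B) hF (R := ρ + 1) (by positivity) hT x₀
  have henergy : ∀ t ∈ Icc (-T) T, ‖weightedInner c (y t) (y t)‖ ≤ energyBound :=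
    norm_le_gronwallBound_of_hasDerivWithinAt_Icc (by positivity) (by positivity)
      (fun t ht => (hy t ht).weightedInner_self)
      (by rw [hy0, Real.norm_of_nonneg (weightedInner_self_nonneg hc x₀)])
      (fun t ht => by
        rw [Real.norm_eq_abs, Real.norm_of_nonneg (weightedInner_self_nonneg hc _)]
        exact abs_two_mul_weightedInner_radialRetraction_le hc hGe B (by positivity) _ _
          (hf t ht))
  refine ⟨y, hy0, fun t ht => ?_⟩
  have hyρ : ‖y t‖ ≤ ρ := by
    rw [← Real.sqrt_sq (norm_nonneg _)]
    refine Real.sqrt_le_sqrt ((sq_norm_le_weightedInner_self hc _).trans ?_)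
    exact mul_le_mul_of_nonneg_left ((le_abs_self _).trans (henergy t ht)) hσ
  simpa only [radialRetraction_of_norm_le (by positivity : 0 < ρ + 1) (by linarith : ‖y t‖ ≤ ρ + 1)]
    using hy t ht

theorem exists_isIntegralCurve_of_energyPreserving (hc : ∀ i, 0 < c i)
    (hG : LocallyLipschitz G) (hGe : ∀ x, ∑ i, x i * G x i = 0) (B : (ι → ℝ) →L[ℝ] ι → ℝ)
    {F : ℝ → ι → ℝ} (hF : Continuous F) (x₀ : ι → ℝ) :
    ∃ x : ℝ → ι → ℝ, x 0 = x₀ ∧ IsIntegralCurve x (fun t x => c * G x - B x + F t) :=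
  exists_isIntegralCurve_of_forall_isIntegralCurveOn_Icc
    ((hG.mul_sub_continuousLinearMap c B).exists_lipschitzOnWith_add_const F)
    fun _ hT => exists_isIntegralCurveOn_Icc_of_energyPreserving hc hG hGe B hF hT x₀

end EnergyPreserving

/-- Global existence for the time-dependent problem `ẋ = C G(x) - Bx + F(t)`:
`C` positive diagonal, `B` an arbitrary matrix, `G` locally Lipschitz and
energy-preserving, `F` continuous.  For every initial state `x₀` there is a global
solution on all of `ℝ` with `x(0) = x₀`. -/
theorem global_existence (N : ℕ) [NeZero N]
    (c : ZMod N → ℝ) (hc : ∀ i, 0 < c i)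
    (Bm : Matrix (ZMod N) (ZMod N) ℝ)
    (G : (ZMod N → ℝ) → ZMod N → ℝ)
    (hGlip : LocallyLipschitz G)
    (hGe : ∀ x : ZMod N → ℝ, ∑ i : ZMod N, x i * G x i = 0)
    (F : ℝ → ZMod N → ℝ) (hF : Continuous F)
    (x₀ : ZMod N → ℝ) :
    ∃ x : ℝ → ZMod N → ℝ, x 0 = x₀ ∧
      ∀ (t : ℝ) (i : ZMod N),
        HasDerivAt (fun s => x s i)
          (c i * G (x t) i - (∑ j : ZMod N, Bm i j * x t j) + F t i) t := by
  obtain ⟨x, hx0, hx⟩ := exists_isIntegralCurve_of_energyPreserving hc hGlip hGe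
    (LinearMap.toContinuousLinearMap (Matrix.mulVecLin Bm)) hF x₀
  refine ⟨x, hx0, fun t i => ?_⟩
  simpa [Matrix.mulVec, dotProduct] using hasDerivAt_pi.1 (hx t) i
end

section
/- For the symmetric advection system ẋ = (G₃ − G̃₃)(x) on an even number N of cyclic sites, the energy at the even sites ∑_j x_{2j}(t)² and the energy at the odd sites ∑_j x_{2j+1}(t)² are each conserved along solutions. -/
/-!
Multiplying the `i`-th equation by `x_i`, the right-hand side becomes
`x_i (x_{i+1} x_{i+2} - x_{i-1} x_{i-2}) = g i - g (i - 2)` with `g i = x_i x_{i+1} x_{i+2}`.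
Summed over any set of sites invariant under `i ↦ i + 2`, such as the even or the odd sites
when `N` is even, this telescopes to zero, so the energy on that set has zero derivative.
-/

section Advection

variable {R : Type*} [CommRing R]

/-- The vector field `G₃ - G̃₃` of the symmetric advection system. -/
def advection (u : R → ℝ) (i : R) : ℝ :=
  u (i - 1) * (u (i + 1) - u (i - 2)) - u (i + 1) * (u (i - 1) - u (i + 2))

-- The indices `i - 2 + 1`, `i - 2 + 2` make the right side literally `g i - g (i - 2)`.
lemma mul_advection_eq_sub (u : R → ℝ) (i : R) :
    u i * advection u i
      = u i * u (i + 1) * u (i + 2) - u (i - 2) * u (i - 2 + 1) * u (i - 2 + 2) := by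
  have h₁ : i - 2 + 1 = i - 1 := by ring
  have h₂ : i - 2 + 2 = i := by ring
  rw [advection, h₁, h₂]
  ring

end Advection

lemma Function.Periodic.sum_ite_sub_eq_zero {G M : Type*} [AddGroup G] [Fintype G]
    [AddCommGroup M] {P : G → Prop} [DecidablePred P] {a : G} (hP : Function.Periodic P a)
    (g : G → M) :
    ∑ i, (if P i then g i - g (i - a) else 0) = 0 := by
  have hshift : ∑ i, (if P i then g (i - a) else 0) = ∑ i, (if P i then g i else 0) :=
    calc ∑ i, (if P i then g (i - a) else 0) = ∑ i, (if P (i - a) then g (i - a) else 0) := by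
          simp only [hP.sub_eq]
      _ = ∑ i, (if P i then g i else 0) :=
          (Equiv.subRight a).sum_comp fun i => if P i then g i else 0
  have hsplit : ∀ i, (if P i then g i - g (i - a) else 0)
      = (if P i then g i else 0) - (if P i then g (i - a) else 0) := by
    intro i
    split_ifs <;> simp
  rw [Finset.sum_congr rfl fun i _ => hsplit i, Finset.sum_sub_distrib, hshift, sub_self]

lemma Function.Periodic.sum_ite_mul_advection_eq_zero {R : Type*} [CommRing R] [Fintype R]
    {P : R → Prop} [DecidablePred P] (hP : Function.Periodic P 2) (u : R → ℝ) :
    ∑ i, (if P i then u i * advection u i else 0) = 0 := by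
  simpa only [mul_advection_eq_sub] using
    hP.sum_ite_sub_eq_zero fun i => u i * u (i + 1) * u (i + 2)

lemma hasDerivAt_sum_ite_sq {ι : Type*} [Fintype ι] (P : ι → Prop) [DecidablePred P]
    {x : ℝ → ι → ℝ} {x' : ι → ℝ} {t : ℝ} (hx : ∀ i, HasDerivAt (fun s => x s i) (x' i) t) :
    HasDerivAt (fun s => ∑ i, if P i then x s i ^ 2 else 0)
      (2 * ∑ i, if P i then x t i * x' i else 0) t := by
  rw [Finset.mul_sum]
  refine HasDerivAt.fun_sum fun i _ => ?_
  split_ifs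
  · simpa [mul_assoc] using (hx i).fun_pow 2
  · simpa using hasDerivAt_const t (0 : ℝ)

lemma ZMod.periodic_even_val_two {N : ℕ} [NeZero N] (hN : Even N) :
    Function.Periodic (fun i : ZMod N => Even i.val) 2 := by
  intro i
  have hmod : ∀ m, m % N % 2 = m % 2 := fun m => Nat.mod_mod_of_dvd m hN.two_dvd
  simp only [ZMod.val_add, ZMod.val_two_eq_two_mod, Nat.even_iff, hmod]
  rw [Nat.add_mod, hmod]
  simp

theorem sum_ite_sq_eq_of_hasDerivAt_advection {R : Type*} [CommRing R] [Fintype R]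
    {P : R → Prop} [DecidablePred P] (hP : Function.Periodic P 2) {x : ℝ → R → ℝ}
    (hx : ∀ t i, HasDerivAt (fun s => x s i) (advection (x t) i) t) (s t : ℝ) :
    ∑ i, (if P i then x s i ^ 2 else 0) = ∑ i, (if P i then x t i ^ 2 else 0) := by
  have hderiv : ∀ t, HasDerivAt (fun s => ∑ i, if P i then x s i ^ 2 else 0) 0 t := fun t => by
    simpa only [hP.sum_ite_mul_advection_eq_zero, mul_zero] using
      hasDerivAt_sum_ite_sq P (hx t)
  exact is_const_of_deriv_eq_zero (fun t => (hderiv t).differentiableAt)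
    (fun t => (hderiv t).deriv) s t

theorem symmetric_advection_even_odd_energy_general (N : ℕ) (hEven : Even N)
    [NeZero N] (x : ℝ → ZMod N → ℝ)
    (hx : ∀ (t : ℝ) (i : ZMod N),
      HasDerivAt (fun s => x s i)
        (x t (i - 1) * (x t (i + 1) - x t (i - 2))
          - x t (i + 1) * (x t (i - 1) - x t (i + 2))) t) :
    (∀ s t : ℝ,
      ∑ i : ZMod N, (if Even i.val then x s i ^ 2 else 0)
        = ∑ i : ZMod N, (if Even i.val then x t i ^ 2 else 0)) ∧
    (∀ s t : ℝ,
      ∑ i : ZMod N, (if ¬ Even i.val then x s i ^ 2 else 0)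
        = ∑ i : ZMod N, (if ¬ Even i.val then x t i ^ 2 else 0)) := by
  have hperiodic := ZMod.periodic_even_val_two hEven
  exact ⟨sum_ite_sq_eq_of_hasDerivAt_advection hperiodic hx,
    sum_ite_sq_eq_of_hasDerivAt_advection (P := fun i => ¬ Even i.val)
      (hperiodic.comp Not) hx⟩

/-- For the symmetric advection system `ẋ = (G₃ − G̃₃)(x)` on an even number `N ≥ 6` of
cyclic sites, the energy at the even sites `∑_{i even} x_i(t)²` and the energy at the odd
sites `∑_{i odd} x_i(t)²` are each conserved along solutions. -/
theorem symmetric_advection_even_odd_energy (N : ℕ) (hN : 6 ≤ N) (hEven : Even N)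
    [NeZero N] (x : ℝ → ZMod N → ℝ)
    (hx : ∀ (t : ℝ) (i : ZMod N),
      HasDerivAt (fun s => x s i)
        (x t (i - 1) * (x t (i + 1) - x t (i - 2))
          - x t (i + 1) * (x t (i - 1) - x t (i + 2))) t) :
    (∀ s t : ℝ,
      ∑ i : ZMod N, (if Even i.val then x s i ^ 2 else 0)
        = ∑ i : ZMod N, (if Even i.val then x t i ^ 2 else 0)) ∧
    (∀ s t : ℝ,
      ∑ i : ZMod N, (if ¬ Even i.val then x s i ^ 2 else 0)
        = ∑ i : ZMod N, (if ¬ Even i.val then x t i ^ 2 else 0)) :=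
  symmetric_advection_even_odd_energy_general N hEven x hx
end

section
/- For the symmetric advection system ẋ = (G₃ − G̃₃)(x) on N = 4 sites, the quantities x₀(t)² + x₂(t)² and x₁(t)² + x₃(t)² are both conserved along solutions. -/
/-! Writing `ω = x₁ - x₃`, the system gives `ẋ₀ = ω x₂` and `ẋ₂ = -ω x₀`, so `(x₀, x₂)` rotates
with angular velocity `ω` and keeps its length; the same holds for `(x₁, x₃)` with `ω = x₂ - x₀`. -/

theorem sq_add_sq_eq_of_hasDerivAt_rotation {a b ω : ℝ → ℝ}
    (ha : ∀ t, HasDerivAt a (ω t * b t) t) (hb : ∀ t, HasDerivAt b (-(ω t * a t)) t)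
    (s t : ℝ) : a s ^ 2 + b s ^ 2 = a t ^ 2 + b t ^ 2 := by
  have hderiv : ∀ u, HasDerivAt (fun v => a v ^ 2 + b v ^ 2) 0 u := fun u =>
    (((ha u).fun_pow 2).fun_add ((hb u).fun_pow 2)).congr_deriv (by push_cast; ring)
  exact is_const_of_deriv_eq_zero (fun u => (hderiv u).differentiableAt)
    (fun u => (hderiv u).deriv) s t

theorem advection_N4_sq_add_sq_eq (x : ℝ → ZMod 4 → ℝ)
    (hx : ∀ (t : ℝ) (i : ZMod 4),
      HasDerivAt (fun s => x s i)
        (x t (i + 1) * x t (i + 2) - x t (i - 1) * x t (i - 2)) t)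
    (i : ZMod 4) (s t : ℝ) :
    x s i ^ 2 + x s (i + 2) ^ 2 = x t i ^ 2 + x t (i + 2) ^ 2 := by
  have hsub₁ : ∀ j : ZMod 4, j - 1 = j + 3 := by decide
  have hsub₂ : ∀ j : ZMod 4, j - 2 = j + 2 := by decide
  have hadd₁ : ∀ j : ZMod 4, j + 2 + 1 = j + 3 := by decide
  have hadd₂ : ∀ j : ZMod 4, j + 2 + 2 = j := by decide
  have hadd₃ : ∀ j : ZMod 4, j + 2 + 3 = j + 1 := by decide
  refine sq_add_sq_eq_of_hasDerivAt_rotation (a := fun u => x u i) (b := fun u => x u (i + 2))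
    (ω := fun u => x u (i + 1) - x u (i + 3)) (fun u => ?_) (fun u => ?_) s t
  · convert hx u i using 1
    rw [hsub₁, hsub₂]
    ring
  · convert hx u (i + 2) using 1
    rw [hsub₁, hsub₂, hadd₁, hadd₂, hadd₃]
    ring

/-- For the symmetric advection system `ẋ_i = x_{i+1}x_{i+2} − x_{i−1}x_{i−2}` on `N = 4`
cyclic sites, the quantities `x₀² + x₂²` and `x₁² + x₃²` are both conserved. -/
theorem symmetric_advection_N4_conserved
    (x : ℝ → ZMod 4 → ℝ)
    (hx : ∀ (t : ℝ) (i : ZMod 4),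
      HasDerivAt (fun s => x s i)
        (x t (i + 1) * x t (i + 2) - x t (i - 1) * x t (i - 2)) t) :
    ∀ s t : ℝ,
      (x s 0 ^ 2 + x s 2 ^ 2 = x t 0 ^ 2 + x t 2 ^ 2) ∧
      (x s 1 ^ 2 + x s 3 ^ 2 = x t 1 ^ 2 + x t 3 ^ 2) := fun s t =>
  ⟨by simpa using advection_N4_sq_add_sq_eq x hx 0 s t,
    advection_N4_sq_add_sq_eq x hx 1 s t⟩
end

section
/- For the L96 bilinear map B_L given by B_L(x,y)_j = x_{j−1}(y_{j+1} − y_{j−2}) + y_{j−1}(x_{j+1} − x_{j−2}), and Fourier vectors q_k with entries N^{−1/2}ω^{jk} (ω = e^{2πi/N}), one has G_L(q_k) = N^{−1/2}(1 − ω^{−3k}) q_{2k}; in particular, if 3 divides N and k is a multiple of N/3, then G_L(q_k) = 0. -/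
open Complex

private lemma zpow_eq_of_zmod {N : ℕ} [NeZero N] {ω : ℂ} (hω0 : ω ≠ 0) (hω : ω ^ N = 1)
    (a b : ℤ) (h : ((a : ZMod N)) = ((b : ZMod N))) : ω ^ a = ω ^ b := by
  have hmod : a ≡ b [ZMOD N] := (ZMod.intCast_eq_intCast_iff a b N).mp h
  obtain ⟨t, ht⟩ := Int.ModEq.dvd hmod
  have ha : a = b + (N : ℤ) * (-t) := by linarith
  rw [ha, zpow_add₀ hω0, zpow_mul, zpow_natCast, hω, one_zpow, mul_one]

/-- For the L96 advection map `G_L(x)_i = x_{i−1}(x_{i+1} − x_{i−2})` extended to complex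
vectors and the normalized Fourier vectors `q_k` (entries `N^{-1/2} ω^{jk}`,
`ω = e^{2πi/N}`), one has `G_L(q_k) = N^{-1/2}(1 − ω^{−3k}) q_{2k}`.  In particular, if
`3 ∣ N` and `k` is a multiple of `N/3`, then `G_L(q_k) = 0`. -/
theorem lorenz96_advection_fourier (N : ℕ) (hN : 4 ≤ N) [NeZero N] (k : ZMod N) :
    (∀ j : ZMod N,
      (fun i : ZMod N => ((Real.sqrt N : ℝ) : ℂ)⁻¹
          * Complex.exp (2 * Real.pi * Complex.I / N) ^ (i.val * k.val)) (j - 1) *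
        ((fun i : ZMod N => ((Real.sqrt N : ℝ) : ℂ)⁻¹
            * Complex.exp (2 * Real.pi * Complex.I / N) ^ (i.val * k.val)) (j + 1)
          - (fun i : ZMod N => ((Real.sqrt N : ℝ) : ℂ)⁻¹
              * Complex.exp (2 * Real.pi * Complex.I / N) ^ (i.val * k.val)) (j - 2))
      = ((Real.sqrt N : ℝ) : ℂ)⁻¹
          * (1 - Complex.exp (2 * Real.pi * Complex.I / N) ^ (-(3 * (k.val : ℤ))))
          * (((Real.sqrt N : ℝ) : ℂ)⁻¹
              * Complex.exp (2 * Real.pi * Complex.I / N) ^ (j.val * (2 * k).val))) ∧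
    (3 ∣ N → ∀ m : ℕ, k = ((m * (N / 3) : ℕ) : ZMod N) →
      ∀ j : ZMod N,
        (fun i : ZMod N => ((Real.sqrt N : ℝ) : ℂ)⁻¹
            * Complex.exp (2 * Real.pi * Complex.I / N) ^ (i.val * k.val)) (j - 1) *
          ((fun i : ZMod N => ((Real.sqrt N : ℝ) : ℂ)⁻¹
              * Complex.exp (2 * Real.pi * Complex.I / N) ^ (i.val * k.val)) (j + 1)
            - (fun i : ZMod N => ((Real.sqrt N : ℝ) : ℂ)⁻¹
                * Complex.exp (2 * Real.pi * Complex.I / N) ^ (i.val * k.val)) (j - 2))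
          = 0) := by
  have hNne : (N : ℂ) ≠ 0 := Nat.cast_ne_zero.mpr (NeZero.ne N)
  set ω := Complex.exp (2 * Real.pi * Complex.I / N) with hωdef
  have hω0 : ω ≠ 0 := Complex.exp_ne_zero _
  have hω : ω ^ N = 1 := by
    rw [hωdef, ← Complex.exp_nat_mul]
    have : (N : ℂ) * (2 * Real.pi * Complex.I / N) = 2 * Real.pi * Complex.I := by
      field_simp
    rw [this, Complex.exp_two_pi_mul_I]
  set c : ℂ := ((Real.sqrt N : ℝ) : ℂ)⁻¹ with hc
  have hmain : ∀ j : ZMod N,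
      c * ω ^ ((j - 1).val * k.val) *
        (c * ω ^ ((j + 1).val * k.val) - c * ω ^ ((j - 2).val * k.val))
      = c * (1 - ω ^ (-(3 * (k.val : ℤ)))) * (c * ω ^ (j.val * (2 * k).val)) := by
    intro j
    set a : ℤ := (j.val : ℤ) with ha
    set b : ℤ := (k.val : ℤ) with hb
    have cong : ∀ (x : ZMod N) (e : ℤ), ((x * k : ZMod N) : ZMod N) = ((e * b : ℤ) : ZMod N) →
        ω ^ (x.val * k.val) = ω ^ ((e * b : ℤ)) := by
      intro x e hx
      rw [← zpow_natCast]
      apply zpow_eq_of_zmod hω0 hω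
      rw [← hx]
      push_cast [ha, hb, ZMod.natCast_val, ZMod.cast_id]
      ring
    have h1 : ω ^ ((j - 1).val * k.val) = ω ^ ((a - 1) * b) :=
      cong (j - 1) (a - 1) (by push_cast [ha, hb, ZMod.natCast_val, ZMod.cast_id]; ring)
    have h2 : ω ^ ((j + 1).val * k.val) = ω ^ ((a + 1) * b) :=
      cong (j + 1) (a + 1) (by push_cast [ha, hb, ZMod.natCast_val, ZMod.cast_id]; ring)
    have h3 : ω ^ ((j - 2).val * k.val) = ω ^ ((a - 2) * b) :=
      cong (j - 2) (a - 2) (by push_cast [ha, hb, ZMod.natCast_val, ZMod.cast_id]; ring)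
    have h4 : ω ^ (j.val * (2 * k).val) = ω ^ (2 * a * b) := by
      rw [← zpow_natCast]
      apply zpow_eq_of_zmod hω0 hω
      push_cast [ha, hb, ZMod.natCast_val, ZMod.cast_id]
      ring
    rw [h1, h2, h3, h4]
    have e1 : ω ^ ((a - 1) * b) * ω ^ ((a + 1) * b) = ω ^ (2 * a * b) := by
      rw [← zpow_add₀ hω0]; congr 1; ring
    have e2 : ω ^ ((a - 1) * b) * ω ^ ((a - 2) * b) = ω ^ (2 * a * b) * ω ^ (-(3 * b)) := by
      rw [← zpow_add₀ hω0, ← zpow_add₀ hω0]; congr 1; ring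
    linear_combination c ^ 2 * e1 - c ^ 2 * e2
  refine ⟨hmain, ?_⟩
  intro h3N m hk j
  simp only
  rw [show (fun i : ZMod N => c * ω ^ (i.val * k.val)) (j - 1) *
      ((fun i : ZMod N => c * ω ^ (i.val * k.val)) (j + 1)
        - (fun i : ZMod N => c * ω ^ (i.val * k.val)) (j - 2))
      = c * ω ^ ((j - 1).val * k.val) *
        (c * ω ^ ((j + 1).val * k.val) - c * ω ^ ((j - 2).val * k.val)) from rfl,
    hmain j]
  have hzero : ω ^ (-(3 * (k.val : ℤ))) = 1 := by
    have : ω ^ (-(3 * (k.val : ℤ))) = ω ^ (0 : ℤ) := by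
      apply zpow_eq_of_zmod hω0 hω
      have h3k : (3 : ZMod N) * k = 0 := by
        rw [hk]
        have : 3 * (N / 3) = N := Nat.mul_div_cancel' h3N
        push_cast
        rw [show (3 : ZMod N) * ((m : ZMod N) * ((N / 3 : ℕ) : ZMod N))
            = (m : ZMod N) * ((3 * (N / 3) : ℕ) : ZMod N) by push_cast; ring, this]
        simp
      push_cast [ZMod.natCast_val, ZMod.cast_id]
      rw [neg_eq_zero]
      exact h3k
    rw [this, zpow_zero]
  rw [hzero]
  ring
end

section
/- Let B and C be positive diagonal N×N matrices and G a quadratic, energy-preserving, locally Lipschitz map with bilinear form B(·,·) and linearization A[x] = B(x,·). Suppose x_∞ ∈ R^N is a stationary solution of CG(x) − Bx + F = 0 such that −C^{−1}B + A[x_∞] is negative definite. Then along any solution x(t) of ẋ = CG(x) − Bx + F, the quantity V(t) = (x(t) − x_∞)^T C^{−1} (x(t) − x_∞) satisfies V'(t) ≤ −2λ V(t) for some λ > 0, and hence x(t) → x_∞ as t → ∞. -/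
/-!
With `y = x - x_∞`, stationarity and the expansion `G(x_∞ + y) = G(x_∞) + 𝓑(x_∞, y) + G(y)` give
`ẏ = C G(y) + C A[x_∞] y - B y`. In `V = yᵀ C⁻¹ y` the term `C G(y)` contributes `2 yᵀ G(y) = 0`
by energy preservation, so `V' = 2 yᵀ (-C⁻¹B + A[x_∞]) y`. A negative definite form is bounded
above by `-λ V` (both are 2-homogeneous, compare them on the unit sphere), hence
`V(t) e^{2λt}` is antitone, `V → 0` exponentially, and so `x → x_∞`.
-/

open Filter Topology

section NegDefinite

variable {E : Type*} [NormedAddCommGroup E] [NormedSpace ℝ E]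

theorem apply_zero_of_smul_eq_sq_mul {Q : E → ℝ}
    (hQ : ∀ (a : ℝ) y, Q (a • y) = a ^ 2 * Q y) : Q 0 = 0 := by
  simpa using hQ 0 0

theorem exists_pos_le_neg_mul_of_neg_of_homogeneous [FiniteDimensional ℝ E] [Nontrivial E]
    {Q W : E → ℝ} (hQ : Continuous Q) (hW : Continuous W)
    (hQsmul : ∀ (a : ℝ) y, Q (a • y) = a ^ 2 * Q y)
    (hWsmul : ∀ (a : ℝ) y, W (a • y) = a ^ 2 * W y) (hneg : ∀ y, y ≠ 0 → Q y < 0) :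
    ∃ μ, 0 < μ ∧ ∀ y, Q y ≤ -μ * W y := by
  have hS := isCompact_sphere (0 : E) 1
  have hSne := (NormedSpace.sphere_nonempty (x := (0 : E))).2 zero_le_one
  obtain ⟨u, hu, hQmax⟩ := hS.exists_isMaxOn hSne hQ.continuousOn
  obtain ⟨v, -, hWmax⟩ := hS.exists_isMaxOn hSne hW.continuousOn
  have hQu : Q u < 0 := hneg u (ne_zero_of_mem_unit_sphere ⟨u, hu⟩)
  have hK : 0 < |W v| + 1 := by positivity
  have hμ : 0 < -Q u / (|W v| + 1) := div_pos (neg_pos.2 hQu) hK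
  refine ⟨-Q u / (|W v| + 1), hμ, fun y => ?_⟩
  have on_sphere : ∀ z ∈ Metric.sphere (0 : E) 1, Q z ≤ -(-Q u / (|W v| + 1)) * W z := by
    intro z hz
    have hWz : W z ≤ |W v| + 1 := (hWmax hz).trans ((le_abs_self _).trans (by linarith))
    calc Q z ≤ Q u := hQmax hz
      _ = -(-Q u / (|W v| + 1)) * (|W v| + 1) := by field_simp
      _ ≤ -(-Q u / (|W v| + 1)) * W z := by
        rw [neg_mul, neg_mul, neg_le_neg_iff]
        exact mul_le_mul_of_nonneg_left hWz hμ.le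
  rcases eq_or_ne y 0 with rfl | hy
  · simp [apply_zero_of_smul_eq_sq_mul hQsmul, apply_zero_of_smul_eq_sq_mul hWsmul]
  · have hz : ‖y‖⁻¹ • y ∈ Metric.sphere (0 : E) 1 := by
      simp [norm_smul, norm_ne_zero_iff.2 hy]
    rw [← smul_inv_smul₀ (norm_ne_zero_iff.2 hy) y, hQsmul, hWsmul, mul_left_comm]
    exact mul_le_mul_of_nonneg_left (on_sphere _ hz) (sq_nonneg _)

end NegDefinite

theorem antitone_mul_exp_of_hasDerivAt_le {V V' : ℝ → ℝ} {k : ℝ}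
    (hV : ∀ t, HasDerivAt V (V' t) t) (hle : ∀ t, V' t ≤ -k * V t) :
    Antitone fun t => V t * Real.exp (k * t) := by
  have hg : ∀ t, HasDerivAt (fun t => V t * Real.exp (k * t))
      (V' t * Real.exp (k * t) + V t * (Real.exp (k * t) * k)) t := fun t =>
    (hV t).mul (by simpa using ((hasDerivAt_id t).const_mul k).exp)
  refine antitone_of_deriv_nonpos (fun t => (hg t).differentiableAt) fun t => ?_
  rw [(hg t).deriv]
  nlinarith [hle t, Real.exp_pos (k * t)]

theorem tendsto_zero_of_hasDerivAt_le_neg_mul {V V' : ℝ → ℝ} {k : ℝ} (hk : 0 < k)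
    (hV : ∀ t, HasDerivAt V (V' t) t) (hle : ∀ t, V' t ≤ -k * V t) (hnonneg : ∀ t, 0 ≤ V t) :
    Tendsto V atTop (𝓝 0) := by
  have hdecay : ∀ t, 0 ≤ t → V t ≤ V 0 * Real.exp (-k * t) := fun t ht => by
    have : V t * Real.exp (k * t) ≤ V 0 * Real.exp (k * 0) :=
      antitone_mul_exp_of_hasDerivAt_le hV hle ht
    rw [mul_zero, Real.exp_zero, mul_one] at this
    rwa [neg_mul, Real.exp_neg, ← div_eq_mul_inv, le_div_iff₀ (Real.exp_pos _)]
  have hbound : Tendsto (fun t => V 0 * Real.exp (-k * t)) atTop (𝓝 0) := by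
    simpa using (Real.tendsto_exp_neg_atTop_nhds_zero.comp
      (tendsto_id.const_mul_atTop hk)).const_mul (V 0)
  exact tendsto_of_tendsto_of_tendsto_of_le_of_le' tendsto_const_nhds hbound
    (Eventually.of_forall hnonneg) ((eventually_ge_atTop 0).mono hdecay)

def LinearMap.mk₂OfSymm (R : Type*) {M P : Type*} [CommSemiring R] [AddCommMonoid M]
    [Module R M] [AddCommMonoid P] [Module R P] (f : M → M → P) (hsymm : ∀ x y, f x y = f y x)
    (hadd : ∀ x y z, f (x + y) z = f x z + f y z)
    (hsmul : ∀ (a : R) x y, f (a • x) y = a • f x y) : M →ₗ[R] M →ₗ[R] P :=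
  LinearMap.mk₂ R f hadd hsmul (fun x y z => by rw [hsymm, hadd, hsymm y, hsymm z])
    (fun a x y => by rw [hsymm, hsmul, hsymm])

section Lyapunov

variable {ι : Type*} {𝓑 : (ι → ℝ) → (ι → ℝ) → ι → ℝ} {G : (ι → ℝ) → ι → ℝ}

theorem quadratic_add_apply (hsymm : ∀ x y, 𝓑 x y = 𝓑 y x)
    (hadd : ∀ x y z, 𝓑 (x + y) z = 𝓑 x z + 𝓑 y z)
    (hGB : ∀ x, G x = fun i => (1 / 2 : ℝ) * 𝓑 x x i) (x y : ι → ℝ) (i : ι) :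
    G (x + y) i = G x i + 𝓑 x y i + G y i := by
  simp only [hGB, hadd, Pi.add_apply]
  rw [hsymm x (x + y), hsymm y (x + y), hadd, hadd, hsymm y x]
  simp only [Pi.add_apply]
  ring

variable [Fintype ι]

-- `yᵀ C⁻¹ y` for `C = diag c`
noncomputable def weightedSqNorm (c y : ι → ℝ) : ℝ := ∑ i, y i ^ 2 / c i

-- `yᵀ (-C⁻¹B + A) y` for `B = diag b`, `C = diag c`
noncomputable def linearizedForm (b c : ι → ℝ) (A : (ι → ℝ) → ι → ℝ) (y : ι → ℝ) : ℝ :=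
  ∑ i, y i * (-(b i / c i) * y i + A y i)

theorem continuous_weightedSqNorm (c : ι → ℝ) : Continuous (weightedSqNorm c) := by
  unfold weightedSqNorm
  fun_prop

theorem weightedSqNorm_smul (c : ι → ℝ) (a : ℝ) (y : ι → ℝ) :
    weightedSqNorm c (a • y) = a ^ 2 * weightedSqNorm c y := by
  simp only [weightedSqNorm, Finset.mul_sum, Pi.smul_apply, smul_eq_mul]
  exact Finset.sum_congr rfl fun i _ => by ring

theorem weightedSqNorm_nonneg {c : ι → ℝ} (hc : ∀ i, 0 < c i) (y : ι → ℝ) :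
    0 ≤ weightedSqNorm c y :=
  Finset.sum_nonneg fun i _ => div_nonneg (sq_nonneg _) (hc i).le

theorem continuous_linearizedForm (b c : ι → ℝ) (A : (ι → ℝ) →ₗ[ℝ] ι → ℝ) :
    Continuous (linearizedForm b c A) := by
  have := A.continuous_of_finiteDimensional
  unfold linearizedForm
  fun_prop

theorem linearizedForm_smul (b c : ι → ℝ) (A : (ι → ℝ) →ₗ[ℝ] ι → ℝ) (a : ℝ) (y : ι → ℝ) :
    linearizedForm b c A (a • y) = a ^ 2 * linearizedForm b c A y := by
  simp only [linearizedForm, map_smul, Finset.mul_sum, Pi.smul_apply, smul_eq_mul]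
  exact Finset.sum_congr rfl fun i _ => by ring

theorem tendsto_of_weightedSqNorm_sub_tendsto_zero {α : Type*} {l : Filter α} {c : ι → ℝ}
    (hc : ∀ i, 0 < c i) {x : α → ι → ℝ} {xs : ι → ℝ}
    (h : Tendsto (fun s => weightedSqNorm c (x s - xs)) l (𝓝 0)) : Tendsto x l (𝓝 xs) := by
  refine tendsto_pi_nhds.2 fun i => ?_
  have hterm : Tendsto (fun s => (x s i - xs i) ^ 2 / c i) l (𝓝 0) :=
    tendsto_of_tendsto_of_tendsto_of_le_of_le tendsto_const_nhds h
      (fun s => div_nonneg (sq_nonneg _) (hc i).le)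
      (fun s => Finset.single_le_sum (f := fun j => (x s j - xs j) ^ 2 / c j)
        (fun j _ => div_nonneg (sq_nonneg _) (hc j).le) (Finset.mem_univ i))
  have hsq : Tendsto (fun s => (x s i - xs i) ^ 2) l (𝓝 0) := by
    simpa [div_mul_cancel₀ _ (hc i).ne'] using hterm.mul_const (c i)
  have habs : Tendsto (fun s => |x s i - xs i|) l (𝓝 0) := by
    simpa [Function.comp_def, Real.sqrt_sq_eq_abs] using
      (Real.continuous_sqrt.tendsto 0).comp hsq
  simpa using (tendsto_zero_iff_abs_tendsto_zero _).2 habs |>.add_const (xs i)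

theorem hasDerivAt_weightedSqNorm_sub (c xs : ι → ℝ) {x : ℝ → ι → ℝ} {v : ι → ℝ} {t : ℝ}
    (hx : ∀ i, HasDerivAt (fun s => x s i) (v i) t) :
    HasDerivAt (fun s => weightedSqNorm c (x s - xs)) (2 * ∑ i, (x t - xs) i * v i / c i) t := by
  have hterm : ∀ i, HasDerivAt (fun s => (x s i - xs i) ^ 2 / c i)
      (2 * ((x t - xs) i * v i / c i)) t := fun i =>
    (((hx i).sub_const (xs i)).fun_pow 2).div_const (c i)
      |>.congr_deriv (by rw [Pi.sub_apply]; ring)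
  rw [Finset.mul_sum]
  exact HasDerivAt.fun_sum fun i _ => hterm i

theorem sum_sub_mul_vectorField_div_eq (hsymm : ∀ x y, 𝓑 x y = 𝓑 y x)
    (hadd : ∀ x y z, 𝓑 (x + y) z = 𝓑 x z + 𝓑 y z)
    (hGB : ∀ x, G x = fun i => (1 / 2 : ℝ) * 𝓑 x x i) (hGe : ∀ y, ∑ i, y i * G y i = 0)
    {b c F xs : ι → ℝ} (hc : ∀ i, c i ≠ 0)
    (hstat : ∀ i, c i * G xs i - b i * xs i + F i = 0) (x : ι → ℝ) :
    ∑ i, (x - xs) i * (c i * G x i - b i * x i + F i) / c i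
      = linearizedForm b c (𝓑 xs) (x - xs) := by
  have hterm : ∀ i, (x - xs) i * (c i * G x i - b i * x i + F i) / c i
      = (x - xs) i * G (x - xs) i
        + (x - xs) i * (-(b i / c i) * (x - xs) i + 𝓑 xs (x - xs) i) := by
    intro i
    have hGx : G x i = G xs i + 𝓑 xs (x - xs) i + G (x - xs) i := by
      rw [← quadratic_add_apply hsymm hadd hGB, add_sub_cancel]
    have hF : F i = b i * xs i - c i * G xs i := by linarith [hstat i]
    rw [hGx, hF, Pi.sub_apply]
    field_simp [hc i]
    ring
  rw [Finset.sum_congr rfl fun i _ => hterm i, Finset.sum_add_distrib, hGe, zero_add]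
  rfl

end Lyapunov

theorem lyapunov_convergence_general (N : ℕ) [NeZero N]
    (c b : ZMod N → ℝ) (hc : ∀ i, 0 < c i)
    (𝓑 : (ZMod N → ℝ) → (ZMod N → ℝ) → ZMod N → ℝ)
    (hsymm : ∀ x y, 𝓑 x y = 𝓑 y x)
    (hadd : ∀ x y z, 𝓑 (x + y) z = 𝓑 x z + 𝓑 y z)
    (hsmul : ∀ (a : ℝ) (x y), 𝓑 (a • x) y = a • 𝓑 x y)
    (G : (ZMod N → ℝ) → ZMod N → ℝ)
    (hGB : ∀ x, G x = fun i => (1 / 2 : ℝ) * 𝓑 x x i)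
    (hGe : ∀ y : ZMod N → ℝ, ∑ i : ZMod N, y i * G y i = 0)
    (F xs : ZMod N → ℝ)
    (hstat : ∀ i : ZMod N, c i * G xs i - b i * xs i + F i = 0)
    (hneg : ∀ y : ZMod N → ℝ, y ≠ 0 →
      ∑ i : ZMod N, y i * (-(b i / c i) * y i + 𝓑 xs y i) < 0) :
    ∃ lam : ℝ, 0 < lam ∧
      ∀ x : ℝ → ZMod N → ℝ,
        (∀ (t : ℝ) (i : ZMod N),
          HasDerivAt (fun s => x s i) (c i * G (x t) i - b i * x t i + F i) t) →
        (∀ t : ℝ,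
          deriv (fun s => ∑ i : ZMod N, (x s i - xs i) ^ 2 / c i) t
            ≤ -2 * lam * ∑ i : ZMod N, (x t i - xs i) ^ 2 / c i) ∧
        Tendsto x atTop (nhds xs) := by
  let A := LinearMap.mk₂OfSymm ℝ 𝓑 hsymm hadd hsmul xs
  obtain ⟨lam, hlam, hQ⟩ : ∃ lam, 0 < lam ∧
      ∀ y, linearizedForm b c (𝓑 xs) y ≤ -lam * weightedSqNorm c y :=
    exists_pos_le_neg_mul_of_neg_of_homogeneous (continuous_linearizedForm b c A)
      (continuous_weightedSqNorm c) (linearizedForm_smul b c A) (weightedSqNorm_smul c) hneg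
  refine ⟨lam, hlam, fun x hx => ?_⟩
  have hV : ∀ t, HasDerivAt (fun s => weightedSqNorm c (x s - xs))
      (2 * linearizedForm b c (𝓑 xs) (x t - xs)) t := fun t => by
    rw [← sum_sub_mul_vectorField_div_eq hsymm hadd hGB hGe (fun i => (hc i).ne') hstat]
    exact hasDerivAt_weightedSqNorm_sub c xs (hx t)
  have hle : ∀ t, 2 * linearizedForm b c (𝓑 xs) (x t - xs)
      ≤ -(2 * lam) * weightedSqNorm c (x t - xs) := fun t => by
    linarith [hQ (x t - xs)]
  refine ⟨fun t => (hV t).deriv.trans_le ((hle t).trans_eq ?_), ?_⟩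
  · simp only [weightedSqNorm, Pi.sub_apply]
    ring
  · exact tendsto_of_weightedSqNorm_sub_tendsto_zero hc <|
      tendsto_zero_of_hasDerivAt_le_neg_mul (by positivity) hV hle
        fun t => weightedSqNorm_nonneg hc _

/-- Global stability near a stationary solution: let `C`, `B` be positive diagonal matrices
(entries `c i`, `b i`), let `G = (1/2) 𝓑(x,x)` be quadratic, energy-preserving and locally
Lipschitz with linearization `A[x]y = 𝓑(x,y)`, and let `x_∞` be a stationary solution of
`CG(x) − Bx + F = 0` such that `−C⁻¹B + A[x_∞]` is negative definite.  Then there is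
`λ > 0` such that along every solution of `ẋ = CG(x) − Bx + F`, the Lyapunov function
`V(t) = (x(t) − x_∞)ᵀ C⁻¹ (x(t) − x_∞)` satisfies `V'(t) ≤ −2λ V(t)`, and `x(t) → x_∞`. -/
theorem lyapunov_convergence (N : ℕ) [NeZero N]
    (c b : ZMod N → ℝ) (hc : ∀ i, 0 < c i) (hb : ∀ i, 0 < b i)
    (𝓑 : (ZMod N → ℝ) → (ZMod N → ℝ) → ZMod N → ℝ)
    (hsymm : ∀ x y, 𝓑 x y = 𝓑 y x)
    (hadd : ∀ x y z, 𝓑 (x + y) z = 𝓑 x z + 𝓑 y z)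
    (hsmul : ∀ (a : ℝ) (x y), 𝓑 (a • x) y = a • 𝓑 x y)
    (G : (ZMod N → ℝ) → ZMod N → ℝ)
    (hGB : ∀ x, G x = fun i => (1 / 2 : ℝ) * 𝓑 x x i)
    (hGe : ∀ y : ZMod N → ℝ, ∑ i : ZMod N, y i * G y i = 0)
    (hGlip : LocallyLipschitz G)
    (F xs : ZMod N → ℝ)
    (hstat : ∀ i : ZMod N, c i * G xs i - b i * xs i + F i = 0)
    (hneg : ∀ y : ZMod N → ℝ, y ≠ 0 →
      ∑ i : ZMod N, y i * (-(b i / c i) * y i + 𝓑 xs y i) < 0) :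
    ∃ lam : ℝ, 0 < lam ∧
      ∀ x : ℝ → ZMod N → ℝ,
        (∀ (t : ℝ) (i : ZMod N),
          HasDerivAt (fun s => x s i) (c i * G (x t) i - b i * x t i + F i) t) →
        (∀ t : ℝ,
          deriv (fun s => ∑ i : ZMod N, (x s i - xs i) ^ 2 / c i) t
            ≤ -2 * lam * ∑ i : ZMod N, (x t i - xs i) ^ 2 / c i) ∧
        Tendsto x atTop (nhds xs) :=
  lyapunov_convergence_general N c b hc 𝓑 hsymm hadd hsmul G hGB hGe F xs hstat hneg
end
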